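/- arXiv:1711.07159 — 9 statements merged into one kernel-verified Lean document; each statement's English description precedes it below -/
import Mathlib

section
/- For all natural numbers a, b, c, d, the binomial identity C(a+b, a) · C(a+c+d, d) = Σ_{j=0}^{min(a,d)} C(c+d, c+j) · C(b+j, j) · C(a+b, j+b) holds. -/
/-!
Trinomial revision `C(a+b, j+b) · C(b+j, j) = C(a+b, a) · C(a, j)` pulls the factor `C(a+b, a)`
out of every summand; what remains is Vandermonde's convolution for `C(a + (c+d), d)`, in which
the terms with `j > a` vanish, so the sum may stop at `min a d`.
-/

open Finset

namespace Nat

theorem choose_add_mul_add_choose (a b j : ℕ) :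
    (a + b).choose (j + b) * (b + j).choose j = (a + b).choose a * a.choose j := by
  rcases le_or_gt j a with hj | hj
  · rw [add_comm b j, choose_mul (by omega), choose_mul hj,
      ← choose_symm (k := a - j) (by omega)]
    congr 2
    omega
  · simp [choose_eq_zero_of_lt hj, choose_eq_zero_of_lt (show a + b < j + b by omega)]

theorem sum_range_choose_add_mul_choose (a c d : ℕ) :
    ∑ j ∈ range (d + 1), (c + d).choose (c + j) * a.choose j = (a + c + d).choose d := by
  rw [add_assoc, add_choose_eq, Finset.Nat.sum_antidiagonal_eq_sum_range_succ_mk]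
  refine sum_congr rfl fun j hj => ?_
  rw [mul_comm, ← choose_symm (show c + j ≤ c + d by simp only [mem_range] at hj; omega)]
  congr 2
  omega

theorem sum_range_min_choose_mul (a d : ℕ) (f : ℕ → ℕ) :
    ∑ j ∈ range (min a d + 1), f j * a.choose j = ∑ j ∈ range (d + 1), f j * a.choose j := by
  refine sum_subset (by intro j; simp) fun j hjd hja => ?_
  simp only [mem_range] at hjd hja
  rw [choose_eq_zero_of_lt (by omega), mul_zero]

end Nat

/-- For all natural numbers `a, b, c, d`:
`C(a+b, a) * C(a+c+d, d) = ∑_{j=0}^{min a d} C(c+d, c+j) * C(b+j, j) * C(a+b, j+b)`. -/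
theorem stmt_0 (a b c d : ℕ) :
    (a + b).choose a * (a + c + d).choose d =
      ∑ j ∈ Finset.range (min a d + 1),
        (c + d).choose (c + j) * (b + j).choose j * (a + b).choose (j + b) := by
  calc (a + b).choose a * (a + c + d).choose d
      = (a + b).choose a * ∑ j ∈ range (min a d + 1), (c + d).choose (c + j) * a.choose j := by
        rw [Nat.sum_range_min_choose_mul, Nat.sum_range_choose_add_mul_choose]
    _ = _ := by
        rw [mul_sum]
        refine sum_congr rfl fun j _ => ?_
        rw [mul_assoc, mul_comm ((b + j).choose j), Nat.choose_add_mul_add_choose]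
        ring
end

section
/- Let A be a finite-dimensional self-injective algebra over a field k and M a finite-dimensional faithful right A-module. Then some finite direct sum of copies of M contains the regular module A as a direct summand. -/
/-! Choosing a `k`-basis `b₁, …, bᵣ` of `M`, the map `a ↦ (bᵢ a)ᵢ : A → M^r` is injective: an
element annihilating every `bᵢ` annihilates their `k`-span `M`, hence vanishes by faithfulness.
Since `A` is injective as a right module over itself, this embedding splits. -/

open Function LinearMap

theorem injective_pi_toSpanSingleton_of_span_eq_top {k R M ι : Type*} [CommSemiring k]
    [Semiring R] [AddCommMonoid M] [Module k M] [Module R M] [SMulCommClass R k M]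
    [FaithfulSMul R M] {v : ι → M} (hv : Submodule.span k (Set.range v) = ⊤) :
    Injective (LinearMap.pi fun i => toSpanSingleton R M (v i)) := by
  intro r s hrs
  have hspan : Submodule.span k (Set.range v) ≤
      LinearMap.eqLocus (DistribSMul.toLinearMap k M r)
        (DistribSMul.toLinearMap k M s) :=
    Submodule.span_le.mpr <| Set.range_subset_iff.mpr (congrFun hrs)
  exact FaithfulSMul.eq_of_smul_eq_smul (α := M) fun m => hspan (hv.ge Submodule.mem_top)

theorem stmt_2_general (k : Type*) [Field k] (A : Type*) [Ring A] [Algebra k A]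
    [Module.Injective Aᵐᵒᵖ A]
    (M : Type*) [AddCommGroup M] [Module k M] [Module Aᵐᵒᵖ M]
    [IsScalarTower k Aᵐᵒᵖ M] [FiniteDimensional k M] [FaithfulSMul Aᵐᵒᵖ M] :
    ∃ (r : ℕ) (f : A →ₗ[Aᵐᵒᵖ] (Fin r → M)) (g : (Fin r → M) →ₗ[Aᵐᵒᵖ] A),
      g.comp f = LinearMap.id := by
  let b := Module.finBasis k M
  let f : A →ₗ[Aᵐᵒᵖ] (Fin (Module.finrank k M) → M) :=
    (LinearMap.pi fun i => toSpanSingleton Aᵐᵒᵖ M (b i)) ∘ₗ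
      (MulOpposite.opLinearEquiv Aᵐᵒᵖ).toLinearMap
  have hf : Injective f :=
    (injective_pi_toSpanSingleton_of_span_eq_top (k := k) b.span_eq).comp
      (MulOpposite.opLinearEquiv Aᵐᵒᵖ).injective
  obtain ⟨g, hg⟩ := Module.Injective.extension_property Aᵐᵒᵖ A _ _ f hf LinearMap.id
  exact ⟨_, f, g, hg⟩

/-- Let `A` be a finite-dimensional self-injective algebra over a field `k`
and `M` a finite-dimensional faithful right `A`-module.  Then some finite direct sum of
copies of `M` contains the regular module `A` as a direct summand, i.e. there is a split
injection of right `A`-modules `A → M^{⊕r}`. -/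
theorem stmt_2 (k : Type*) [Field k] (A : Type*) [Ring A] [Algebra k A]
    [FiniteDimensional k A] [Module.Injective Aᵐᵒᵖ A]
    (M : Type*) [AddCommGroup M] [Module k M] [Module Aᵐᵒᵖ M]
    [IsScalarTower k Aᵐᵒᵖ M] [FiniteDimensional k M] [FaithfulSMul Aᵐᵒᵖ M] :
    ∃ (r : ℕ) (f : A →ₗ[Aᵐᵒᵖ] (Fin r → M)) (g : (Fin r → M) →ₗ[Aᵐᵒᵖ] A),
      g.comp f = LinearMap.id :=
  stmt_2_general k A M
end

section
/- Let A be a finite-dimensional self-injective algebra over a field k, M a finite-dimensional faithful right A-module, and B = End_A(M). Then the canonical algebra map A → End_B(M), sending a to the map m ↦ m·a, is an isomorphism (i.e., A and B satisfy the double centralizer property on M). -/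
/-!
Since `A` is self-injective and `M` is faithful, the embedding `A → Mⁿ`, `a ↦ (b i · a)ᵢ`, along
a `k`-basis `b` of `M` splits, so `A` is a retract of `Mⁿ` and `M` is a generator. An element `f`
of the double centralizer commutes with every `A`-linear map `Mⁿ → M`; applying this to
`x ↦ m · p x`, where `p : Mⁿ → A` is the retraction, shows that `f` is right multiplication by
`p (f (b i))ᵢ`.
-/

open MulOpposite Module

universe u v w

theorem Module.Injective.of_linearEquiv {R : Type u} [Ring R] {Q : Type v} {N : Type w}
    [AddCommGroup Q] [Module R Q] [AddCommGroup N] [Module R N] [Small.{v} R]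
    [Module.Injective R Q] (e : Q ≃ₗ[R] N) : Module.Injective R N :=
  ((Module.Baer.of_injective ‹_›).of_equiv e).injective

namespace Module

section Semiring

variable {R M : Type*} [Semiring R] [AddCommMonoid M] [Module R M]

theorem End.apply_linearMap_pi {ι : Type*} [Fintype ι] [DecidableEq ι] (f : End (End R M) M)
    (g : (ι → M) →ₗ[R] M) (x : ι → M) : f (g x) = g (fun i ↦ f (x i)) := by
  have hg : ∀ y : ι → M, g y = ∑ i, (g ∘ₗ LinearMap.single R (fun _ ↦ M) i) (y i) := fun y ↦ by
    simp only [LinearMap.comp_apply, LinearMap.coe_single, ← map_sum, Finset.univ_sum_single]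
  rw [hg, hg, map_sum]
  exact Finset.sum_congr rfl fun i _ ↦ f.map_smul _ (x i)

/-- Generators are balanced. -/
theorem toModuleEnd_moduleEnd_surjective_of_retract {ι : Type*} [Finite ι]
    (s : R →ₗ[R] (ι → M)) (p : (ι → M) →ₗ[R] R) (hps : p ∘ₗ s = LinearMap.id) :
    Function.Surjective (toModuleEnd (End R M) (S := R) M) := by
  classical
  have := Fintype.ofFinite ι
  intro f
  refine ⟨p (fun i ↦ f (s 1 i)), LinearMap.ext fun m ↦ ?_⟩
  let g := LinearMap.toSpanSingleton R M m ∘ₗ p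
  have hg : g (s 1) = m := by
    simp [g, ← LinearMap.comp_apply p s, hps]
  calc p (fun i ↦ f (s 1 i)) • m = g (fun i ↦ f (s 1 i)) := rfl
    _ = f m := by rw [← End.apply_linearMap_pi, hg]

theorem injective_pi_toSpanSingleton_basis {k : Type*} [Semiring k] [Module k M]
    [SMulCommClass R k M] [FaithfulSMul R M] {ι : Type*} (b : Basis ι k M) :
    Function.Injective (LinearMap.pi fun i ↦ LinearMap.toSpanSingleton R M (b i)) := by
  intro r r' h
  refine FaithfulSMul.eq_of_smul_eq_smul (α := M) fun m ↦ ?_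
  have := b.ext (f₁ := DistribSMul.toLinearMap k M r) (f₂ := DistribSMul.toLinearMap k M r')
    fun i ↦ congrFun h i
  exact LinearMap.congr_fun this m

end Semiring

theorem toModuleEnd_moduleEnd_bijective_of_injective_pi {R M : Type*} [Ring R] [AddCommGroup M]
    [Module R M] [Module.Injective R R] {ι : Type*} [Finite ι] (b : ι → M)
    (hb : Function.Injective (LinearMap.pi fun i ↦ LinearMap.toSpanSingleton R M (b i))) :
    Function.Bijective (toModuleEnd (End R M) (S := R) M) := by
  refine ⟨fun r r' h ↦ hb (funext fun i ↦ LinearMap.congr_fun h (b i)), ?_⟩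
  obtain ⟨p, hp⟩ := Module.Injective.extension_property R R R (ι → M) _ hb LinearMap.id
  exact toModuleEnd_moduleEnd_surjective_of_retract _ p hp

end Module

theorem stmt_3_general (k : Type*) [Field k] (A : Type*) [Ring A] [Algebra k A]
    [Module.Injective Aᵐᵒᵖ A]
    (M : Type*) [AddCommGroup M] [Module k M] [Module Aᵐᵒᵖ M]
    [IsScalarTower k Aᵐᵒᵖ M] [FiniteDimensional k M] [FaithfulSMul Aᵐᵒᵖ M] :
    Function.Bijective
      (Module.toModuleEnd (Module.End Aᵐᵒᵖ M) M :
        Aᵐᵒᵖ →+* Module.End (Module.End Aᵐᵒᵖ M) M) := by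
  have : Module.Injective Aᵐᵒᵖ Aᵐᵒᵖ := .of_linearEquiv (opLinearEquiv Aᵐᵒᵖ)
  exact Module.toModuleEnd_moduleEnd_bijective_of_injective_pi _
    (Module.injective_pi_toSpanSingleton_basis (Module.finBasis k M))

/-- Let `A` be a finite-dimensional self-injective algebra over a field `k`
(the regular right module `A` is injective over itself), `M` a finite-dimensional faithful
right `A`-module, and `B = End_A(M)`.  Then the canonical algebra map `A → End_B(M)`,
sending `a` to `m ↦ m·a`, is an isomorphism (the double centralizer property). -/
theorem stmt_3 (k : Type*) [Field k] (A : Type*) [Ring A] [Algebra k A]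
    [FiniteDimensional k A] [Module.Injective Aᵐᵒᵖ A]
    (M : Type*) [AddCommGroup M] [Module k M] [Module Aᵐᵒᵖ M]
    [IsScalarTower k Aᵐᵒᵖ M] [FiniteDimensional k M] [FaithfulSMul Aᵐᵒᵖ M] :
    Function.Bijective
      (Module.toModuleEnd (Module.End Aᵐᵒᵖ M) M :
        Aᵐᵒᵖ →+* Module.End (Module.End Aᵐᵒᵖ M) M) :=
  stmt_3_general k A M
end

section
/- Let A be a finite-dimensional self-injective algebra, M a finite-dimensional faithful right A-module, and B = End_A(M). Then the centers of A and B are canonically isomorphic as algebras. -/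
/-! Central elements of `A` act on `M` by `A`-linear maps, which are central in `End_A(M)`, and
faithfulness makes this injective. Conversely, a finite `k`-spanning family `s` of the faithful
module `M` embeds `A` into `Mⁿ` by `a ↦ (sᵢ a)ᵢ`, and self-injectivity gives this embedding `ι` a
retraction `π`. A central `φ ∈ End_A(M)` commutes with every matrix entry of the endomorphism
`ι ∘ π` of `Mⁿ`, so `(φ sᵢ)ᵢ = (ι ∘ π)(φ sᵢ)ᵢ` lies in `ι(A)`: `φ sᵢ = sᵢ a` for some `a`.
Adjoining an arbitrary `m` to the family shows `φ m = m a`, and then `a` is central. -/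

section CentralEndomorphisms

variable {R M : Type*} [Ring R] [AddCommGroup M] [Module R M]

theorem Module.End.commute_piMap_of_mem_center {ι : Type*} [Finite ι]
    {φ : Module.End R M} (hφ : φ ∈ Subring.center (Module.End R M))
    (f : Module.End R (ι → M)) : Commute (LinearMap.piMap fun _ => φ) f := by
  classical
  refine LinearMap.pi_ext fun j x => funext fun i => ?_
  -- the `(i, j)` matrix entry of `f` is an endomorphism of `M`, hence commutes with `φ`
  let fij : Module.End R M := LinearMap.proj i ∘ₗ f ∘ₗ LinearMap.single R (fun _ => M) j
  have := LinearMap.congr_fun (Subring.mem_center_iff.mp hφ fij) x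
  have hsingle : Pi.map (fun _ => ⇑φ) (Pi.single j x) = Pi.single j (φ x) :=
    (Pi.single_op (fun _ => φ) (fun _ => φ.map_zero) j x).symm
  simpa [fij, hsingle] using this.symm

universe u in
theorem Module.End.piMap_mem_range_of_mem_center {ι : Type*} [Finite ι]
    {Q : Type u} [AddCommGroup Q] [Module R Q] [Small.{u} R] [Module.Injective R Q]
    {f : Q →ₗ[R] ι → M} (hf : Function.Injective f)
    {φ : Module.End R M} (hφ : φ ∈ Subring.center (Module.End R M))
    {v : ι → M} (hv : v ∈ LinearMap.range f) :
    LinearMap.piMap (fun _ => φ) v ∈ LinearMap.range f := by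
  obtain ⟨q, rfl⟩ := hv
  -- for a retraction `π` of `f`, the endomorphism `f ∘ π` of `ι → M` is the identity on `range f`
  obtain ⟨π, hπ⟩ := Module.Injective.extension_property R Q Q (ι → M) f hf LinearMap.id
  have hfπ : ∀ q, f (π (f q)) = f q := fun q => by rw [← LinearMap.comp_apply π f, hπ]; rfl
  refine ⟨π (LinearMap.piMap (fun _ => φ) (f q)), ?_⟩
  have := LinearMap.congr_fun (commute_piMap_of_mem_center hφ (f ∘ₗ π)) (f q)
  simpa [hfπ] using this.symm

theorem Module.End.exists_smul_eq_of_mem_center [Module.Injective R R] {ι : Type*} [Finite ι]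
    {s : ι → M} (hs : ∀ r : R, (∀ i, r • s i = 0) → r = 0)
    {φ : Module.End R M} (hφ : φ ∈ Subring.center (Module.End R M)) :
    ∃ r : R, ∀ i, φ (s i) = r • s i := by
  let f : R →ₗ[R] ι → M := LinearMap.pi fun i => LinearMap.toSpanSingleton R M (s i)
  have hf : Function.Injective f :=
    (injective_iff_map_eq_zero f).mpr fun r hr => hs r fun i => congrFun hr i
  obtain ⟨r, hr⟩ := piMap_mem_range_of_mem_center hf hφ ⟨1, rfl⟩
  exact ⟨r, fun i => by simpa [f] using (congrFun hr i).symm⟩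

theorem Module.End.exists_eq_smul_of_mem_center [Module.Injective R R] {ι : Type*} [Finite ι]
    {s : ι → M} (hs : ∀ r : R, (∀ i, r • s i = 0) → r = 0)
    {φ : Module.End R M} (hφ : φ ∈ Subring.center (Module.End R M)) :
    ∃ r : R, ∀ m, φ m = r • m := by
  obtain ⟨r, hr⟩ := exists_smul_eq_of_mem_center hs hφ
  refine ⟨r, fun m => ?_⟩
  -- enlarging `s` by `m` produces a scalar that still works on `s`, hence equals `r`
  obtain ⟨r', hr'⟩ := exists_smul_eq_of_mem_center (s := fun o : Option ι => o.elim m s)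
    (fun r h => hs r fun i => h (some i)) hφ
  have hr'r : r' = r := sub_eq_zero.mp <| hs _ fun i => by
    have hi : φ (s i) = r' • s i := hr' (some i)
    rw [sub_smul, ← hi, ← hr i, sub_self]
  simpa [hr'r] using hr' none

theorem mem_center_of_forall_apply_eq_smul {ι : Type*} {s : ι → M}
    (hs : ∀ r : R, (∀ i, r • s i = 0) → r = 0) {φ : Module.End R M} {r : R}
    (hφ : ∀ m, φ m = r • m) : r ∈ Subring.center R :=
  Subring.mem_center_iff.mpr fun c => sub_eq_zero.mp <| hs _ fun i => by
    rw [sub_smul, mul_smul, mul_smul, ← hφ, ← hφ, φ.map_smul, sub_self]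

variable (R M) in
def centerToModuleEnd : Subring.center R →+* Subring.center (Module.End R M) where
  toFun r :=
    ⟨{ toFun := fun m => (r : R) • m
       map_add' := smul_add _
       map_smul' := fun c m => by
         rw [RingHom.id_apply, smul_smul, smul_smul, Subring.mem_center_iff.mp r.2 c] },
     Subring.mem_center_iff.mpr fun g => LinearMap.ext fun m => g.map_smul (r : R) m⟩
  map_one' := by ext; simp
  map_mul' r r' := by ext m; exact mul_smul (r : R) r' m
  map_zero' := by ext; simp
  map_add' r r' := by ext; simp [add_smul]

theorem centerToModuleEnd_apply (r : Subring.center R) (m : M) :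
    (centerToModuleEnd R M r : Module.End R M) m = (r : R) • m :=
  rfl

theorem centerToModuleEnd_bijective [Module.Injective R R] {ι : Type*} [Finite ι]
    {s : ι → M} (hs : ∀ r : R, (∀ i, r • s i = 0) → r = 0) :
    Function.Bijective (centerToModuleEnd R M) := by
  refine ⟨fun r r' h => Subtype.ext <| sub_eq_zero.mp <| hs _ fun i => ?_, fun φ => ?_⟩
  · rw [sub_smul, ← centerToModuleEnd_apply, ← centerToModuleEnd_apply, h, sub_self]
  · obtain ⟨r, hr⟩ := Module.End.exists_eq_smul_of_mem_center hs φ.2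
    exact ⟨⟨r, mem_center_of_forall_apply_eq_smul hs hr⟩,
      Subtype.ext <| LinearMap.ext fun m => (hr m).symm⟩

end CentralEndomorphisms

theorem eq_zero_of_forall_smul_eq_zero_of_span_eq_top {k R M ι : Type*} [CommSemiring k]
    [Semiring R] [Algebra k R] [AddCommMonoid M] [Module k M] [Module R M] [IsScalarTower k R M]
    [FaithfulSMul R M] {s : ι → M} (hs : Submodule.span k (Set.range s) = ⊤) (r : R)
    (h : ∀ i, r • s i = 0) : r = 0 := by
  have : DistribSMul.toLinearMap k M r = 0 := LinearMap.ext_on_range hs h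
  exact FaithfulSMul.eq_of_smul_eq_smul (α := M) fun m =>
    (LinearMap.congr_fun this m).trans (zero_smul R m).symm

theorem Module.Injective.mulOpposite_self {A : Type*} [Ring A] [Module.Injective Aᵐᵒᵖ A] :
    Module.Injective Aᵐᵒᵖ Aᵐᵒᵖ :=
  ((Module.Baer.of_injective ‹_›).of_equiv (MulOpposite.opLinearEquiv Aᵐᵒᵖ)).injective

theorem stmt_4_general (k : Type*) [Field k] (A : Type*) [Ring A] [Algebra k A]
    [Module.Injective Aᵐᵒᵖ A]
    (M : Type*) [AddCommGroup M] [Module k M] [Module Aᵐᵒᵖ M]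
    [IsScalarTower k Aᵐᵒᵖ M] [FiniteDimensional k M] [FaithfulSMul Aᵐᵒᵖ M] :
    Nonempty (Subring.center A ≃+* Subring.center (Module.End Aᵐᵒᵖ M)) := by
  have := Module.Injective.mulOpposite_self (A := A)
  obtain ⟨n, s, hs⟩ := Module.Finite.exists_fin (R := k) (M := M)
  exact ⟨Subring.centerToMulOpposite.trans <| RingEquiv.ofBijective _ <|
    centerToModuleEnd_bijective (eq_zero_of_forall_smul_eq_zero_of_span_eq_top hs)⟩

/-- Let `A` be a finite-dimensional self-injective algebra over a field `k`,
`M` a finite-dimensional faithful right `A`-module, and `B = End_A(M)`.  Then the centers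
of `A` and `B` are isomorphic as rings (canonically, via the action of `z(A)` on `M`). -/
theorem stmt_4 (k : Type*) [Field k] (A : Type*) [Ring A] [Algebra k A]
    [FiniteDimensional k A] [Module.Injective Aᵐᵒᵖ A]
    (M : Type*) [AddCommGroup M] [Module k M] [Module Aᵐᵒᵖ M]
    [IsScalarTower k Aᵐᵒᵖ M] [FiniteDimensional k M] [FaithfulSMul Aᵐᵒᵖ M] :
    Nonempty (Subring.center A ≃+* Subring.center (Module.End Aᵐᵒᵖ M)) :=
  stmt_4_general k A M
end

section
/- Let A and B be rings and M a (B, A)-bimodule such that the canonical maps B → End_A(M_A) and A → End_B(_B M) are both isomorphisms (double centralizer). Then the left dual Hom_B(_B M, B) and the right dual Hom_A(M_A, A) are canonically isomorphic as (A, B)-bimodules. -/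
/-!
For `g : Hom_R(M, R)` and `x : M` the rank-one map `y ↦ g y • x` is `R`-linear, so when
`S → End_R(M)` is bijective it is the action of a unique scalar `s : S`; sending `x` to this `s`
is `S`-linear. The same construction with the roles of `R` and `S` exchanged inverts it, because
both sides describe the same rank-one operator, and `y • ⟨φ g, x⟩ = ⟨y, g⟩ • x` holds by
construction. For the theorem, `R = B` and `S = Aᵐᵒᵖ`, and `unop` turns `Aᵐᵒᵖ`-linear maps
into `Aᵐᵒᵖ` into `Aᵐᵒᵖ`-linear maps into `A`.
-/

open MulOpposite

namespace Module

variable {R S M : Type*} [Ring R] [Ring S] [AddCommGroup M] [Module R M] [Module S M]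
  [SMulCommClass R S M] [SMulCommClass S R M]
  (hS : Function.Bijective (toModuleEnd R M : S →+* End R M))

noncomputable def centralizerDual (g : M →ₗ[R] R) : M →ₗ[S] S where
  toFun x := (RingEquiv.ofBijective _ hS).symm (g.smulRight x)
  map_add' x x' := by
    rw [← map_add]
    congr 1
    ext y
    simp [smul_add]
  map_smul' s x := by
    apply (RingEquiv.ofBijective _ hS).injective
    rw [smul_eq_mul, RingHom.id_apply, map_mul, RingEquiv.apply_symm_apply,
      RingEquiv.apply_symm_apply, RingEquiv.ofBijective_apply]
    ext y
    simp [smul_comm (g y) s x]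

theorem centralizerDual_smul (g : M →ₗ[R] R) (x y : M) :
    centralizerDual hS g x • y = g y • x :=
  LinearMap.congr_fun ((RingEquiv.ofBijective _ hS).apply_symm_apply (g.smulRight x)) y

theorem centralizerDual_apply_eq (g : M →ₗ[R] R) {x : M} {s : S} (hs : ∀ y, s • y = g y • x) :
    centralizerDual hS g x = s :=
  hS.1 <| LinearMap.ext fun y => (centralizerDual_smul hS g x y).trans (hs y).symm

theorem centralizerDual_add (g g' : M →ₗ[R] R) :
    centralizerDual hS (g + g') = centralizerDual hS g + centralizerDual hS g' := by
  ext x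
  refine centralizerDual_apply_eq hS _ fun y => ?_
  simp [add_smul, centralizerDual_smul]

theorem centralizerDual_apply_of_apply_smul {g g' : M →ₗ[R] R} {s : S}
    (hg : ∀ y, g' y = g (s • y)) (x : M) :
    centralizerDual hS g' x = centralizerDual hS g x * s :=
  centralizerDual_apply_eq hS g' fun y => by rw [mul_smul, centralizerDual_smul, hg]

theorem centralizerDual_apply_of_apply_mul {g g' : M →ₗ[R] R} {r : R}
    (hg : ∀ y, g' y = g y * r) (x : M) :
    centralizerDual hS g' x = centralizerDual hS g (r • x) :=
  centralizerDual_apply_eq hS g' fun y => by rw [centralizerDual_smul, hg, mul_smul]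

variable (hR : Function.Bijective (toModuleEnd S M : R →+* End S M))

theorem centralizerDual_centralizerDual (g : M →ₗ[R] R) :
    centralizerDual hR (centralizerDual hS g) = g := by
  ext y
  exact centralizerDual_apply_eq hR _ fun x => (centralizerDual_smul hS g x y).symm

noncomputable def centralizerDualEquiv : (M →ₗ[R] R) ≃+ (M →ₗ[S] S) where
  toFun := centralizerDual hS
  invFun := centralizerDual hR
  left_inv := centralizerDual_centralizerDual hS hR
  right_inv := centralizerDual_centralizerDual hR hS
  map_add' := centralizerDual_add hS

end Module

/-- Let `A`, `B` be rings and `M` a `(B,A)`-bimodule such that the canonical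
maps `B → End_A(M)` and `A → End_B(M)` are both isomorphisms (double centralizer).  Then the
left dual `Hom_B(M, B)` and the right dual `Hom_A(M, A)` are canonically isomorphic as
`(A,B)`-bimodules: there is an additive isomorphism
`φ : Hom_B(M,B) ≃+ Hom_A(M,A)` characterized by `y·⟨φ(g), x⟩_A = ⟨y, g⟩_B·x` which moreover
intertwines the left `A`-actions and right `B`-actions on the two duals. -/
theorem stmt_6 (A B M : Type*) [Ring A] [Ring B] [AddCommGroup M]
    [Module Aᵐᵒᵖ M] [Module B M]
    [SMulCommClass B Aᵐᵒᵖ M] [SMulCommClass Aᵐᵒᵖ B M]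
    (hB : Function.Bijective
      (Module.toModuleEnd Aᵐᵒᵖ M : B →+* Module.End Aᵐᵒᵖ M))
    (hA : Function.Bijective
      (Module.toModuleEnd B M : Aᵐᵒᵖ →+* Module.End B M)) :
    ∃ φ : (M →ₗ[B] B) ≃+ (M →ₗ[Aᵐᵒᵖ] A),
      -- the characterizing compatibility of the evaluation pairings
      (∀ (g : M →ₗ[B] B) (x y : M), (op ((φ g) x)) • y = (g y) • x) ∧
      -- φ intertwines the left A-actions: (a·g)(m) = g(m·a) corresponds to a·(φ g)
      (∀ (a : A) (g g' : M →ₗ[B] B),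
        (∀ m : M, g' m = g ((op a) • m)) → ∀ m : M, (φ g') m = a * (φ g) m) ∧
      -- φ intertwines the right B-actions: (g·b)(m) = g(m)·b corresponds to (φ g)∘(b•)
      (∀ (b : B) (g g' : M →ₗ[B] B),
        (∀ m : M, g' m = g m * b) → ∀ m : M, (φ g') m = (φ g) (b • m)) := by
  refine ⟨(Module.centralizerDualEquiv hA hB).trans
    (LinearEquiv.arrowCongrAddEquiv (.refl _ _) (opLinearEquiv Aᵐᵒᵖ).symm), ?_, ?_, ?_⟩
  · exact Module.centralizerDual_smul hA
  · intro a g g' hg m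
    exact congrArg unop (Module.centralizerDual_apply_of_apply_smul hA hg m)
  · intro b g g' hg m
    exact congrArg unop (Module.centralizerDual_apply_of_apply_mul hA hg m)
end

section
/- Let A be a finite-dimensional symmetric Frobenius algebra over a field k and M a finite-dimensional faithful right A-module with B = End_A(M). Then Hom_B(_B M, B) is isomorphic as an (A, B)-bimodule to the k-linear dual M* = Hom_k(M, k). -/
/-!
Right `A`-linear maps `f : M → A` are matched with `k`-linear functionals by `f ↦ ε ∘ f`,
since `ε` identifies `A` with its `k`-dual.  They are matched with `B`-linear maps `M → B` by
`f ↦ (n ↦ (x ↦ n · f x))`: this is injective as `M` is faithful, and surjective because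
`M` is a generator, `1 = ∑ fᵢ(mᵢ)`.  The latter holds because an `a` with `ε(a · f(m)) = 0` for
all `f, m` kills `M`, since `ε(f(m · a)) = ε(f(m) a) = ε(a f(m))` and the functionals `ε ∘ f`
exhaust `M*`.
-/

open MulOpposite

section

variable {k : Type*} [Field k] {A : Type*} [Ring A] [Algebra k A]
variable {M : Type*} [AddCommGroup M] [Module k M] [Module Aᵐᵒᵖ M] [IsScalarTower k Aᵐᵒᵖ M]

section Frobenius

variable (ε : A →ₗ[k] k)

lemma mul_compr₂_bijective [FiniteDimensional k A]
    (hnd : ∀ a : A, a ≠ 0 → ∃ b : A, ε (a * b) ≠ 0) :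
    Function.Bijective ((LinearMap.mul k A).compr₂ ε) := by
  have hinj : Function.Injective ((LinearMap.mul k A).compr₂ ε) := by
    refine (injective_iff_map_eq_zero _).mpr fun a ha => ?_
    by_contra h
    obtain ⟨b, hb⟩ := hnd a h
    exact hb (LinearMap.congr_fun ha b)
  exact ⟨hinj, (LinearMap.injective_iff_surjective_of_finrank_eq_finrank
    Subspace.dual_finrank_eq.symm).mp hinj⟩

noncomputable def mulLeftDualEquiv [FiniteDimensional k A]
    (hnd : ∀ a : A, a ≠ 0 → ∃ b : A, ε (a * b) ≠ 0) : A ≃ₗ[k] Module.Dual k A :=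
  LinearEquiv.ofBijective _ (mul_compr₂_bijective ε hnd)

@[simp] lemma mulLeftDualEquiv_apply [FiniteDimensional k A]
    (hnd : ∀ a : A, a ≠ 0 → ∃ b : A, ε (a * b) ≠ 0) (a y : A) :
    mulLeftDualEquiv ε hnd a y = ε (a * y) := rfl

def traceComp : (M →ₗ[Aᵐᵒᵖ] A) →+ (M →ₗ[k] k) :=
  AddMonoidHom.mk' (fun f => ε ∘ₗ f.restrictScalars k) fun _ _ => by
    ext m
    simp

@[simp] lemma traceComp_apply (f : M →ₗ[Aᵐᵒᵖ] A) (m : M) : traceComp ε f m = ε (f m) := rfl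

lemma traceComp_injective (hnd : ∀ a : A, a ≠ 0 → ∃ b : A, ε (a * b) ≠ 0) :
    Function.Injective (traceComp (M := M) ε) := by
  refine (injective_iff_map_eq_zero _).mpr fun f hf => LinearMap.ext fun x => ?_
  by_contra hx
  obtain ⟨y, hy⟩ := hnd (f x) hx
  apply hy
  have hfy : f (op y • x) = f x * y := by rw [map_smul, smul_eq_mul_unop, unop_op]
  rw [← hfy, ← traceComp_apply, hf, LinearMap.zero_apply]

/-- The preimage of `l` is `m ↦ D⁻¹(y ↦ l(m · y))`, where `D a = ε(a · _)`; it is right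
`A`-linear because `D` is injective. -/
lemma traceComp_surjective [FiniteDimensional k A]
    (hnd : ∀ a : A, a ≠ 0 → ∃ b : A, ε (a * b) ≠ 0) :
    Function.Surjective (traceComp (M := M) ε) := by
  intro l
  let D := mulLeftDualEquiv ε hnd
  let μ : M →ₗ[k] Module.Dual k A := LinearMap.mk₂ k (fun m y => l (op y • m))
    (fun _ _ _ => by simp [smul_add]) (fun _ _ _ => by simp [smul_comm _ (_ : k)])
    (fun _ _ _ => by simp [add_smul]) (fun _ _ _ => by simp [smul_assoc])
  let f₀ : M →ₗ[k] A := D.symm.toLinearMap ∘ₗ μ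
  have hf₀ : ∀ m y, ε (f₀ m * y) = l (op y • m) := fun m y => by
    rw [← mulLeftDualEquiv_apply ε hnd]
    exact LinearMap.congr_fun (D.apply_symm_apply (μ m)) y
  refine ⟨{ f₀ with map_smul' := fun c m => D.injective (LinearMap.ext fun y => ?_) },
    LinearMap.ext fun m => ?_⟩
  · change ε (f₀ (c • m) * y) = ε (f₀ m * c.unop * y)
    rw [hf₀, mul_assoc, hf₀, op_mul, op_unop, mul_smul]
  · simpa using hf₀ m 1

noncomputable def traceCompEquiv [FiniteDimensional k A]
    (hnd : ∀ a : A, a ≠ 0 → ∃ b : A, ε (a * b) ≠ 0) : (M →ₗ[Aᵐᵒᵖ] A) ≃+ (M →ₗ[k] k) :=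
  AddEquiv.ofBijective (traceComp ε) ⟨traceComp_injective ε hnd, traceComp_surjective ε hnd⟩

@[simp] lemma traceCompEquiv_apply [FiniteDimensional k A]
    (hnd : ∀ a : A, a ≠ 0 → ∃ b : A, ε (a * b) ≠ 0) (f : M →ₗ[Aᵐᵒᵖ] A) (m : M) :
    traceCompEquiv ε hnd f m = ε (f m) := rfl

end Frobenius

lemma eq_of_forall_op_smul_eq [FaithfulSMul Aᵐᵒᵖ M] {a b : A}
    (h : ∀ m : M, op a • m = op b • m) : a = b :=
  op_injective (FaithfulSMul.eq_of_smul_eq_smul h)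

section EndDual

def opSmulRight (f : M →ₗ[Aᵐᵒᵖ] A) (n : M) : Module.End Aᵐᵒᵖ M where
  toFun x := op (f x) • n
  map_add' x y := by simp [add_smul]
  map_smul' c x := by simp [smul_eq_mul_unop, mul_smul]

@[simp] lemma opSmulRight_apply (f : M →ₗ[Aᵐᵒᵖ] A) (n x : M) :
    opSmulRight f n x = op (f x) • n := rfl

lemma opSmulRight_mul (f : M →ₗ[Aᵐᵒᵖ] A) (n : M) (e : Module.End Aᵐᵒᵖ M) :
    opSmulRight f n * e = opSmulRight (f ∘ₗ e) n := rfl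

def endDual : (M →ₗ[Aᵐᵒᵖ] A) →+ (M →ₗ[Module.End Aᵐᵒᵖ M] Module.End Aᵐᵒᵖ M) :=
  AddMonoidHom.mk'
    (fun f =>
      { toFun := opSmulRight f
        map_add' := fun n₁ n₂ => by ext; simp [smul_add]
        map_smul' := fun b n => by ext; simp })
    fun _ _ => by ext; simp [add_smul]

@[simp] lemma endDual_apply (f : M →ₗ[Aᵐᵒᵖ] A) (n : M) : endDual f n = opSmulRight f n := rfl

lemma endDual_injective [FaithfulSMul Aᵐᵒᵖ M] : Function.Injective (endDual (A := A) (M := M)) :=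
  fun _ _ h => LinearMap.ext fun x => eq_of_forall_op_smul_eq fun n =>
    LinearMap.congr_fun (LinearMap.congr_fun h n) x

/-- `n = ∑ (n · fᵢ(_)) (mᵢ)`, so by `B`-linearity `g n = ∑ (n · fᵢ(_)) ∘ g(mᵢ)`. -/
lemma endDual_surjective_of_sum_eq_one {ι : Type*} [Fintype ι] (f : ι → (M →ₗ[Aᵐᵒᵖ] A))
    (m : ι → M) (hsum : ∑ i, f i (m i) = 1) : Function.Surjective (endDual (A := A) (M := M)) := by
  intro g
  refine ⟨∑ i, f i ∘ₗ g (m i), LinearMap.ext fun n => ?_⟩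
  have hn : ∑ i, opSmulRight (f i) n • m i = n := by
    simp only [Module.End.smul_def, opSmulRight_apply, ← Finset.sum_smul, ← Finset.op_sum, hsum,
      op_one, one_smul]
  conv_rhs => rw [← hn]
  simp only [map_sum, map_smul, smul_eq_mul, opSmulRight_mul, LinearMap.sum_apply, endDual_apply]

lemma apply_eq_mul_of_endDual_eq_comp [FaithfulSMul Aᵐᵒᵖ M] {f f' : M →ₗ[Aᵐᵒᵖ] A} {a : A}
    (h : ∀ n, endDual f' n = endDual f (op a • n)) (x : M) : f' x = a * f x :=
  eq_of_forall_op_smul_eq fun n => by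
    rw [← opSmulRight_apply, ← endDual_apply, h, endDual_apply, opSmulRight_apply, ← mul_smul,
      op_mul]

lemma apply_eq_apply_of_endDual_eq_mul [FaithfulSMul Aᵐᵒᵖ M] {f f' : M →ₗ[Aᵐᵒᵖ] A}
    {b : Module.End Aᵐᵒᵖ M} (h : ∀ n, endDual f' n = endDual f n * b) (x : M) :
    f' x = f (b x) :=
  eq_of_forall_op_smul_eq fun n => by
    rw [← opSmulRight_apply, ← endDual_apply, h, endDual_apply, opSmulRight_mul]
    rfl

end EndDual

lemma span_range_apply_eq_top [FiniteDimensional k A] [FaithfulSMul Aᵐᵒᵖ M] (ε : A →ₗ[k] k)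
    (hnd : ∀ a : A, a ≠ 0 → ∃ b : A, ε (a * b) ≠ 0) (hsym : ∀ a b : A, ε (a * b) = ε (b * a)) :
    Submodule.span k (Set.range fun p : (M →ₗ[Aᵐᵒᵖ] A) × M => p.1 p.2) = ⊤ := by
  by_contra hne
  obtain ⟨l, hl, hlT⟩ := Submodule.exists_dual_map_eq_bot_of_lt_top
    (lt_top_iff_ne_top.mpr hne) inferInstance
  obtain ⟨a, rfl⟩ := (mulLeftDualEquiv ε hnd).surjective l
  have ha : ∀ (f : M →ₗ[Aᵐᵒᵖ] A) m, ε (a * f m) = 0 := fun f m => by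
    rw [← mulLeftDualEquiv_apply ε hnd, ← Submodule.mem_bot k, ← hlT]
    exact Submodule.mem_map_of_mem (Submodule.subset_span ⟨(f, m), rfl⟩)
  have hkill : ∀ m : M, op a • m = op (0 : A) • m := fun m => by
    rw [op_zero, zero_smul, ← Module.forall_dual_apply_eq_zero_iff k]
    intro l'
    obtain ⟨f, rfl⟩ := traceComp_surjective ε hnd l'
    rw [traceComp_apply, map_smul, smul_eq_mul_unop, unop_op, hsym, ha]
  exact hl (by rw [eq_of_forall_op_smul_eq hkill, map_zero])

lemma exists_sum_apply_eq_one [FiniteDimensional k A] [FaithfulSMul Aᵐᵒᵖ M] (ε : A →ₗ[k] k)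
    (hnd : ∀ a : A, a ≠ 0 → ∃ b : A, ε (a * b) ≠ 0) (hsym : ∀ a b : A, ε (a * b) = ε (b * a)) :
    ∃ (n : ℕ) (f : Fin n → (M →ₗ[Aᵐᵒᵖ] A)) (m : Fin n → M), ∑ i, f i (m i) = 1 := by
  have h1 := span_range_apply_eq_top (M := M) ε hnd hsym ▸ Submodule.mem_top (x := (1 : A))
  obtain ⟨n, c, s, hs⟩ := Submodule.mem_span_set'.mp h1
  choose p hp using fun i => (s i).2
  refine ⟨n, fun i => (p i).1, fun i => c i • (p i).2, ?_⟩
  simp only [LinearMap.map_smul_of_tower, hp, ← hs]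

end

theorem stmt_8_general (k : Type*) [Field k] (A : Type*) [Ring A] [Algebra k A]
    [FiniteDimensional k A]
    (ε : A →ₗ[k] k)
    (hnd : ∀ a : A, a ≠ 0 → ∃ b : A, ε (a * b) ≠ 0)
    (hsym : ∀ a b : A, ε (a * b) = ε (b * a))
    (M : Type*) [AddCommGroup M] [Module k M] [Module Aᵐᵒᵖ M]
    [IsScalarTower k Aᵐᵒᵖ M] [FaithfulSMul Aᵐᵒᵖ M] :
    ∃ φ : (M →ₗ[Module.End Aᵐᵒᵖ M] Module.End Aᵐᵒᵖ M) ≃+ (M →ₗ[k] k),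
      -- φ intertwines the left A-actions
      (∀ (a : A) (g g' : M →ₗ[Module.End Aᵐᵒᵖ M] Module.End Aᵐᵒᵖ M),
        (∀ m : M, g' m = g ((op a) • m)) →
          ∀ m : M, (φ g') m = (φ g) ((op a) • m)) ∧
      -- φ intertwines the right B-actions
      (∀ (b : Module.End Aᵐᵒᵖ M) (g g' : M →ₗ[Module.End Aᵐᵒᵖ M] Module.End Aᵐᵒᵖ M),
        (∀ m : M, g' m = g m * b) → ∀ m : M, (φ g') m = (φ g) (b • m)) := by
  obtain ⟨n, f, m, hsum⟩ := exists_sum_apply_eq_one (M := M) ε hnd hsym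
  let Ψ := AddEquiv.ofBijective endDual
    ⟨endDual_injective, endDual_surjective_of_sum_eq_one f m hsum⟩
  refine ⟨Ψ.symm.trans (traceCompEquiv ε hnd), fun a g g' hg x => ?_, fun b g g' hg x => ?_⟩
  · obtain ⟨f, rfl⟩ := Ψ.surjective g
    obtain ⟨f', rfl⟩ := Ψ.surjective g'
    simp only [AddEquiv.trans_apply, AddEquiv.symm_apply_apply, traceCompEquiv_apply]
    rw [apply_eq_mul_of_endDual_eq_comp hg, hsym, map_smul, smul_eq_mul_unop, unop_op]
  · obtain ⟨f, rfl⟩ := Ψ.surjective g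
    obtain ⟨f', rfl⟩ := Ψ.surjective g'
    simp only [AddEquiv.trans_apply, AddEquiv.symm_apply_apply, traceCompEquiv_apply]
    rw [apply_eq_apply_of_endDual_eq_mul hg, Module.End.smul_def]

/-- Let `A` be a finite-dimensional symmetric Frobenius algebra over a
field `k` (nondegenerate trace `ε` with `ε(ab) = ε(ba)`) and `M` a finite-dimensional
faithful right `A`-module with `B = End_A(M)`.  Then `Hom_B(M, B)` is isomorphic, as an
`(A,B)`-bimodule, to the `k`-linear dual `M* = Hom_k(M, k)`:  there is an additive
isomorphism `φ` intertwining the left `A`-actions `(a·g)(m) = g(m·a)`, `(a·f)(m) = f(m·a)`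
and the right `B`-actions `(g·b)(m) = g(m)·b`, `(f·b)(m) = f(b•m)`. -/
theorem stmt_8 (k : Type*) [Field k] (A : Type*) [Ring A] [Algebra k A]
    [FiniteDimensional k A]
    (ε : A →ₗ[k] k)
    (hnd : ∀ a : A, a ≠ 0 → ∃ b : A, ε (a * b) ≠ 0)
    (hsym : ∀ a b : A, ε (a * b) = ε (b * a))
    (M : Type*) [AddCommGroup M] [Module k M] [Module Aᵐᵒᵖ M]
    [IsScalarTower k Aᵐᵒᵖ M] [FiniteDimensional k M] [FaithfulSMul Aᵐᵒᵖ M] :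
    ∃ φ : (M →ₗ[Module.End Aᵐᵒᵖ M] Module.End Aᵐᵒᵖ M) ≃+ (M →ₗ[k] k),
      -- φ intertwines the left A-actions
      (∀ (a : A) (g g' : M →ₗ[Module.End Aᵐᵒᵖ M] Module.End Aᵐᵒᵖ M),
        (∀ m : M, g' m = g ((op a) • m)) →
          ∀ m : M, (φ g') m = (φ g) ((op a) • m)) ∧
      -- φ intertwines the right B-actions
      (∀ (b : Module.End Aᵐᵒᵖ M) (g g' : M →ₗ[Module.End Aᵐᵒᵖ M] Module.End Aᵐᵒᵖ M),
        (∀ m : M, g' m = g m * b) → ∀ m : M, (φ g') m = (φ g) (b • m)) :=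
  stmt_8_general k A ε hnd hsym M
end

section
/- In the nilHecke algebra NH_n (generators y_1,...,y_n of degree 2 and ψ_1,...,ψ_{n-1} of degree -2 subject to the nilHecke relations), the element e_n = y_1^{n-1} y_2^{n-2} ⋯ y_n^0 ψ_{w_0}, where ψ_{w_0} corresponds to the longest element of S_n, is an idempotent: e_n² = e_n. -/
/-! The nilHecke algebra `NH n` over a field `k`, presented by generators
`y i` (for `i < n`) and `ψ i` (for `i + 1 < n`) and the nilHecke relations
(generators out of range are set to zero). Indices are 0-based: `ψ i` crosses
strands `i` and `i+1`. -/

namespace Stmt10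

variable (k : Type*) [Field k]

/-- The distinguished generators of the free algebra: `Yf i` will become `y i`,
`Pf i` will become `ψ i`. -/
def Yf (i : ℕ) : FreeAlgebra k (ℕ ⊕ ℕ) := FreeAlgebra.ι k (Sum.inl i)

def Pf (i : ℕ) : FreeAlgebra k (ℕ ⊕ ℕ) := FreeAlgebra.ι k (Sum.inr i)

/-- The defining relations of the nilHecke algebra `NH_n`. -/
inductive Rel (n : ℕ) : FreeAlgebra k (ℕ ⊕ ℕ) → FreeAlgebra k (ℕ ⊕ ℕ) → Prop
  | yy (i j : ℕ) : Rel n (Yf k i * Yf k j) (Yf k j * Yf k i)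
  | ypsi (i j : ℕ) (h1 : i ≠ j) (h2 : i ≠ j + 1) :
      Rel n (Yf k i * Pf k j) (Pf k j * Yf k i)
  | yp (i : ℕ) (h : i + 1 < n) : Rel n (Yf k i * Pf k i) (Pf k i * Yf k (i+1) + 1)
  | py (i : ℕ) (h : i + 1 < n) : Rel n (Pf k i * Yf k i) (Yf k (i+1) * Pf k i + 1)
  | psisq (i : ℕ) : Rel n (Pf k i * Pf k i) 0
  | far (i j : ℕ) (h : i + 1 < j) : Rel n (Pf k i * Pf k j) (Pf k j * Pf k i)
  | braid (i : ℕ) :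
      Rel n (Pf k i * Pf k (i+1) * Pf k i) (Pf k (i+1) * Pf k i * Pf k (i+1))
  | ybound (i : ℕ) (h : n ≤ i) : Rel n (Yf k i) 0
  | pbound (i : ℕ) (h : n ≤ i + 1) : Rel n (Pf k i) 0

/-- The nilHecke algebra on `n` strands. -/
abbrev NH (n : ℕ) := RingQuot (Rel k n)

/-- The dot generator `y i`. -/
def y (n i : ℕ) : NH k n := RingQuot.mkAlgHom k (Rel k n) (Yf k i)

/-- The crossing generator `ψ i`. -/
def psi (n i : ℕ) : NH k n := RingQuot.mkAlgHom k (Rel k n) (Pf k i)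

/-- The product `ψ_L := ψ_{i₁} ⋯ ψ_{i_r}` along a list of indices. -/
def psiList (n : ℕ) (L : List ℕ) : NH k n := (L.map (psi k n)).prod

/-- `ψ_{w₀}`: the nilHecke element of the longest permutation of `S_n`, defined by the
reduced word `(s_0)(s_1 s_0)(s_2 s_1 s_0)⋯(s_{n-2} ⋯ s_0)`. -/
def psiW0 (n : ℕ) : NH k n :=
  ((List.range (n-1)).map (fun m => psiList k n ((List.range (m+1)).reverse))).prod

/-- The element `e_n = y_0^{n-1} y_1^{n-2} ⋯ y_{n-1}^0 · ψ_{w₀}`. -/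
def eIdem (n : ℕ) : NH k n :=
  ((List.range n).map (fun i => y k n i ^ (n - 1 - i))).prod * psiW0 k n

end Stmt10

/-!
Write `c_r = ψ_{r-1} ⋯ ψ_0` (`psiDesc`), `P_t = c_1 c_2 ⋯ c_t` (`psiLongest`, so that
`ψ_{w₀} = P_{n-1}`) and `D_t = y_0^t y_1^{t-1} ⋯ y_t^0` (`stair t 0 (t + 1)`). Then
`e_n = D_{n-1} P_{n-1}`, and it suffices to show `P_t D_t P_t = P_t`.

Braid moves give `c_r ψ_{i+1} = ψ_i c_r` for `i + 1 < r` and `c_r ψ_0 = 0`, hence `c_r² = 0`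
and `ψ_i P_t = 0` for `i < t`: `P_t` annihilates from the right the left ideal `J_t`
(`psiIdeal t`) generated by `ψ_0, …, ψ_{t-1}`. Pushing `c_t` through `D_t`, each `ψ_r` meets
`y_r^{a+1} y_{r+1}^a` and leaves `y_r^a y_{r+1}^{a+1} ψ_r + y_r^a y_{r+1}^a`; the first term
lies in `J_t`, so `c_t D_t ≡ D_{t-1} mod J_t`, and by induction on `t`
`P_t D_t P_t = P_{t-1} D_{t-1} P_t = P_{t-1} D_{t-1} P_{t-1} c_t = P_{t-1} c_t = P_t`.
-/

section

variable {R : Type*} [Ring R] {p u v : R}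

theorem commute_mul_of_mul_eq_add_one (hpu : p * u = v * p + 1) (hpv : p * v = u * p - 1)
    (huv : Commute u v) : Commute p (u * v) :=
  calc p * (u * v) = v * (p * v) + v := by rw [← mul_assoc, hpu]; noncomm_ring
    _ = v * u * p := by rw [hpv]; noncomm_ring
    _ = u * v * p := by rw [huv.eq]

theorem mul_pow_succ_mul_pow (hpu : p * u = v * p + 1) (hpv : p * v = u * p - 1)
    (huv : Commute u v) (a : ℕ) :
    p * (u ^ (a + 1) * v ^ a) = u ^ a * v ^ (a + 1) * p + u ^ a * v ^ a := by
  have hp := (commute_mul_of_mul_eq_add_one hpu hpv huv).pow_right a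
  calc p * (u ^ (a + 1) * v ^ a) = p * (u * v) ^ a * u := by
        rw [huv.mul_pow, pow_succ, mul_assoc (u ^ a), (huv.pow_right a).eq]
        simp only [mul_assoc]
    _ = (u * v) ^ a * (v * p + 1) := by rw [hp.eq, mul_assoc, hpu]
    _ = u ^ a * v ^ (a + 1) * p + u ^ a * v ^ a := by rw [huv.mul_pow]; noncomm_ring

end

namespace Stmt10

section NilHecke

variable {k : Type*} [Field k] {n : ℕ}

local notation "ψ" => psi k n
local notation "Y" => y k n

theorem commute_y_y (i j : ℕ) : Commute (Y i) (Y j) := by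
  show Y i * Y j = Y j * Y i
  simpa only [y, map_mul] using RingQuot.mkAlgHom_rel k (Rel.yy (k := k) (n := n) i j)

theorem commute_psi_y {i j : ℕ} (h₁ : i ≠ j) (h₂ : i ≠ j + 1) : Commute (ψ j) (Y i) := by
  show ψ j * Y i = Y i * ψ j
  simpa only [y, psi, map_mul] using
    (RingQuot.mkAlgHom_rel k (Rel.ypsi (k := k) (n := n) i j h₁ h₂)).symm

theorem psi_mul_y_self {i : ℕ} (h : i + 1 < n) : ψ i * Y i = Y (i + 1) * ψ i + 1 := by
  simpa only [y, psi, map_mul, map_add, map_one] using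
    RingQuot.mkAlgHom_rel k (Rel.py (k := k) i h)

theorem psi_mul_y_succ {i : ℕ} (h : i + 1 < n) : ψ i * Y (i + 1) = Y i * ψ i - 1 := by
  rw [eq_sub_iff_add_eq, eq_comm]
  simpa only [y, psi, map_mul, map_add, map_one] using
    RingQuot.mkAlgHom_rel k (Rel.yp (k := k) i h)

theorem psi_mul_self (i : ℕ) : ψ i * ψ i = 0 := by
  simpa only [psi, map_mul, map_zero] using
    RingQuot.mkAlgHom_rel k (Rel.psisq (k := k) (n := n) i)

theorem commute_psi_psi {i j : ℕ} (h : i + 1 < j) : Commute (ψ i) (ψ j) := by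
  show ψ i * ψ j = ψ j * ψ i
  simpa only [psi, map_mul] using RingQuot.mkAlgHom_rel k (Rel.far (k := k) (n := n) i j h)

theorem psi_braid (i : ℕ) : ψ i * ψ (i + 1) * ψ i = ψ (i + 1) * ψ i * ψ (i + 1) := by
  simpa only [psi, map_mul] using RingQuot.mkAlgHom_rel k (Rel.braid (k := k) (n := n) i)

variable (k n) in
def psiDesc (r : ℕ) : NH k n := psiList k n (List.range r).reverse

variable (k n) in
def psiLongest (t : ℕ) : NH k n := ((List.range t).map fun m => psiDesc k n (m + 1)).prod

theorem psiW0_eq_psiLongest : psiW0 k n = psiLongest k n (n - 1) := rfl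

theorem psiDesc_zero : psiDesc k n 0 = 1 := rfl

theorem psiDesc_succ (r : ℕ) : psiDesc k n (r + 1) = ψ r * psiDesc k n r := by
  simp [psiDesc, psiList, List.range_succ]

theorem psiLongest_zero : psiLongest k n 0 = 1 := rfl

theorem psiLongest_succ (t : ℕ) :
    psiLongest k n (t + 1) = psiLongest k n t * psiDesc k n (t + 1) := by
  simp [psiLongest, List.range_succ]

theorem commute_psi_psiDesc {i r : ℕ} (h : r < i) : Commute (ψ i) (psiDesc k n r) := by
  refine Commute.list_prod_right _ _ fun x hx => ?_
  obtain ⟨j, hj, rfl⟩ := List.mem_map.1 hx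
  exact (commute_psi_psi (by simp at hj; omega)).symm

theorem commute_psi_psiLongest {i t : ℕ} (h : t < i) : Commute (ψ i) (psiLongest k n t) := by
  refine Commute.list_prod_right _ _ fun x hx => ?_
  obtain ⟨m, hm, rfl⟩ := List.mem_map.1 hx
  exact commute_psi_psiDesc (by simp at hm; omega)

theorem psiDesc_mul_psi_succ {i r : ℕ} (h : i + 1 < r) :
    psiDesc k n r * ψ (i + 1) = ψ i * psiDesc k n r := by
  induction r with
  | zero => omega
  | succ r ih =>
    rcases Nat.lt_or_ge (i + 1) r with hir | hir
    · rw [psiDesc_succ, mul_assoc, ih hir, ← mul_assoc, ← (commute_psi_psi hir).eq, mul_assoc]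
    · obtain rfl : r = i + 1 := by omega
      simp only [psiDesc_succ, mul_assoc]
      rw [← (commute_psi_psiDesc (Nat.lt_succ_self i)).eq]
      simp only [← mul_assoc]
      rw [psi_braid]

theorem psiDesc_mul_psi_zero {r : ℕ} (h : 0 < r) : psiDesc k n r * ψ 0 = 0 := by
  induction r with
  | zero => omega
  | succ r ih =>
    rcases r with _ | r
    · rw [psiDesc_succ, psiDesc_zero, mul_one, psi_mul_self]
    · rw [psiDesc_succ, mul_assoc, ih (Nat.succ_pos r), mul_zero]

theorem psiDesc_mul_psiDesc_succ {r s : ℕ} (h : s < r) :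
    psiDesc k n r * psiDesc k n (s + 1) = 0 := by
  induction s with
  | zero => rw [psiDesc_succ, psiDesc_zero, mul_one, psiDesc_mul_psi_zero (by omega)]
  | succ s ih =>
    rw [psiDesc_succ, ← mul_assoc, psiDesc_mul_psi_succ h, mul_assoc, ih (by omega), mul_zero]

theorem psi_mul_psiLongest {i t : ℕ} (h : i < t) : ψ i * psiLongest k n t = 0 := by
  induction t with
  | zero => omega
  | succ t ih =>
    rcases Nat.lt_or_ge i t with hit | hit
    · rw [psiLongest_succ, ← mul_assoc, ih hit, zero_mul]
    · obtain rfl : i = t := by omega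
      have hsq : ψ i * psiDesc k n i * psiDesc k n (i + 1) = 0 := by
        rw [← psiDesc_succ, psiDesc_mul_psiDesc_succ (Nat.lt_succ_self i)]
      rcases i with _ | i
      · simpa only [psiLongest_succ, psiLongest_zero, psiDesc_zero, one_mul, mul_one] using hsq
      · rw [psiLongest_succ, psiLongest_succ, ← mul_assoc, ← mul_assoc,
          (commute_psi_psiLongest (Nat.lt_succ_self i)).eq]
        simp only [mul_assoc] at hsq ⊢
        rw [hsq, mul_zero]

variable (k n) in
def psiIdeal (t : ℕ) : Ideal (NH k n) := Ideal.span (ψ '' Set.Iio t)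

theorem psi_mem_psiIdeal {i t : ℕ} (h : i < t) : ψ i ∈ psiIdeal k n t :=
  Ideal.subset_span ⟨i, h, rfl⟩

theorem mul_psiLongest_of_mem_psiIdeal {t : ℕ} {x : NH k n} (hx : x ∈ psiIdeal k n t) :
    x * psiLongest k n t = 0 := by
  have hle : psiIdeal k n t ≤ LinearMap.ker (LinearMap.toSpanSingleton _ _ (psiLongest k n t)) :=
    Ideal.span_le.2 <| by
      rintro _ ⟨i, hi, rfl⟩
      exact psi_mul_psiLongest hi
  simpa using hle hx

variable (k n) in
def stair (m : ℕ) : ℕ → ℕ → NH k n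
  | _, 0 => 1
  | r, l + 1 => Y r ^ (m - r) * stair m (r + 1) l

theorem stair_zero (m r : ℕ) : stair k n m r 0 = 1 := rfl

theorem stair_succ (m r l : ℕ) : stair k n m r (l + 1) = Y r ^ (m - r) * stair k n m (r + 1) l :=
  rfl

theorem stair_succ_right (m l r : ℕ) :
    stair k n m r (l + 1) = stair k n m r l * Y (r + l) ^ (m - r - l) := by
  induction l generalizing r with
  | zero => simp [stair_succ, stair_zero]
  | succ l ih =>
    rw [stair_succ, ih (r + 1), ← mul_assoc, ← stair_succ, Nat.sub_sub, Nat.sub_sub,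
      add_assoc, add_comm 1 l]

theorem stair_sub (m r : ℕ) :
    stair k n m r (m - r) = Y r ^ (m - r) * stair k n m (r + 1) (m - (r + 1)) := by
  rcases Nat.lt_or_ge r m with h | h
  · rw [show m - r = m - (r + 1) + 1 by omega, stair_succ]
    congr 2
    omega
  · rw [Nat.sub_eq_zero_of_le h, Nat.sub_eq_zero_of_le (by omega), stair_zero, stair_zero,
      pow_zero, mul_one]

theorem stair_eq_prod (m l r : ℕ) :
    stair k n m r l = ((List.range l).map fun t => Y (r + t) ^ (m - r - t)).prod := by
  induction l with
  | zero => rfl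
  | succ l ih => simp [stair_succ_right, ih, List.range_succ]

theorem commute_psi_stair {j m r l : ℕ} (h : r + l ≤ j ∨ j + 2 ≤ r) :
    Commute (ψ j) (stair k n m r l) := by
  induction l generalizing r with
  | zero => exact Commute.one_right _
  | succ l ih =>
    exact ((commute_psi_y (by omega) (by omega)).pow_right _).mul_right (ih (by omega))

theorem psi_mul_stair_sub_mem_psiIdeal {m r : ℕ} (hr : r < m) (hm : m < n) :
    ψ r * (stair k n (m - 1) 0 r * stair k n m r (m - r))
      - stair k n (m - 1) 0 (r + 1) * stair k n m (r + 1) (m - (r + 1)) ∈ psiIdeal k n m := by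
  set a := m - (r + 1)
  set L := stair k n (m - 1) 0 r
  set R := stair k n m (r + 2) (m - (r + 2))
  have hL : stair k n (m - 1) 0 (r + 1) = L * Y r ^ a := by
    rw [stair_succ_right, zero_add]
    congr 2
    omega
  have hS : stair k n m r (m - r) = Y r ^ (a + 1) * Y (r + 1) ^ a * R := by
    rw [stair_sub, stair_sub, show m - r = a + 1 by omega, mul_assoc]
  have hS' : stair k n m (r + 1) a = Y (r + 1) ^ a * R := stair_sub m (r + 1)
  have hψL : Commute (ψ r) L := commute_psi_stair (Or.inl (zero_add r).le)
  have hψR : Commute (ψ r) R := commute_psi_stair (Or.inr le_rfl)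
  have hr' : r + 1 < n := by omega
  have hmove := mul_pow_succ_mul_pow (psi_mul_y_self (k := k) hr') (psi_mul_y_succ hr')
    (commute_y_y r (r + 1)) a
  have hdiff : ψ r * (L * stair k n m r (m - r))
      - stair k n (m - 1) 0 (r + 1) * stair k n m (r + 1) a
      = L * (Y r ^ a * Y (r + 1) ^ (a + 1)) * R * ψ r := by
    rw [hS, hL, hS', ← mul_assoc, hψL.eq, mul_assoc L, ← mul_assoc (ψ r), hmove]
    calc L * ((Y r ^ a * Y (r + 1) ^ (a + 1) * ψ r + Y r ^ a * Y (r + 1) ^ a) * R)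
          - L * Y r ^ a * (Y (r + 1) ^ a * R)
        = L * (Y r ^ a * Y (r + 1) ^ (a + 1)) * (ψ r * R) := by noncomm_ring
      _ = L * (Y r ^ a * Y (r + 1) ^ (a + 1)) * R * ψ r := by rw [hψR.eq, mul_assoc _ R]
  rw [hdiff]
  exact Ideal.mul_mem_left _ _ (psi_mem_psiIdeal hr)

theorem psiDesc_mul_stair_sub_mem_psiIdeal {m : ℕ} (hm : m < n) :
    psiDesc k n m * stair k n m 0 m - stair k n (m - 1) 0 m ∈ psiIdeal k n m := by
  -- `stair (m - 1) 0 r * stair m r (m - r)` is `stair m 0 m` with the exponents of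
  -- `y_0, …, y_{r-1}` lowered by one.
  suffices h : ∀ r ≤ m, psiDesc k n r * stair k n m 0 m
      - stair k n (m - 1) 0 r * stair k n m r (m - r) ∈ psiIdeal k n m by
    simpa [stair_zero] using h m le_rfl
  intro r hr
  induction r with
  | zero => simp [psiDesc_zero, stair_zero]
  | succ r ih =>
    have hsplit : psiDesc k n (r + 1) * stair k n m 0 m
        - stair k n (m - 1) 0 (r + 1) * stair k n m (r + 1) (m - (r + 1))
        = ψ r * (psiDesc k n r * stair k n m 0 m
            - stair k n (m - 1) 0 r * stair k n m r (m - r))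
          + (ψ r * (stair k n (m - 1) 0 r * stair k n m r (m - r))
            - stair k n (m - 1) 0 (r + 1) * stair k n m (r + 1) (m - (r + 1))) := by
      rw [psiDesc_succ, mul_assoc, mul_sub]
      abel
    rw [hsplit]
    exact add_mem (Ideal.mul_mem_left _ _ (ih (by omega)))
      (psi_mul_stair_sub_mem_psiIdeal (by omega) hm)

theorem psiLongest_mul_stair_mul_psiLongest {t : ℕ} (ht : t < n) :
    psiLongest k n t * stair k n t 0 (t + 1) * psiLongest k n t = psiLongest k n t := by
  induction t with
  | zero => simp [psiLongest_zero, stair_succ, stair_zero]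
  | succ t ih =>
    have hD : stair k n (t + 1) 0 (t + 2) = stair k n (t + 1) 0 (t + 1) := by
      rw [stair_succ_right, zero_add, Nat.sub_zero, Nat.sub_self, pow_zero, mul_one]
    have hc : psiDesc k n (t + 1) * stair k n (t + 1) 0 (t + 1) * psiLongest k n (t + 1)
        = stair k n t 0 (t + 1) * psiLongest k n (t + 1) := by
      rw [← sub_eq_zero, ← sub_mul]
      exact mul_psiLongest_of_mem_psiIdeal (psiDesc_mul_stair_sub_mem_psiIdeal ht)
    calc psiLongest k n (t + 1) * stair k n (t + 1) 0 (t + 2) * psiLongest k n (t + 1)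
        = psiLongest k n t * (psiDesc k n (t + 1) * stair k n (t + 1) 0 (t + 1)
            * psiLongest k n (t + 1)) := by
          rw [hD, psiLongest_succ]; simp only [mul_assoc]
      _ = psiLongest k n t * stair k n t 0 (t + 1) * psiLongest k n t * psiDesc k n (t + 1) := by
          rw [hc, psiLongest_succ]; simp only [mul_assoc]
      _ = psiLongest k n (t + 1) := by rw [ih (by omega), psiLongest_succ]

theorem eIdem_eq : eIdem k n = stair k n (n - 1) 0 n * psiLongest k n (n - 1) := by
  simp [eIdem, psiW0_eq_psiLongest, stair_eq_prod]

end NilHecke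

end Stmt10

/-- In the nilHecke algebra `NH_n`, the element
`e_n = y_1^{n-1} y_2^{n-2} ⋯ y_n^0 ψ_{w₀}` is an idempotent. -/
theorem stmt_10 (k : Type*) [Field k] (n : ℕ) :
    Stmt10.eIdem k n * Stmt10.eIdem k n = Stmt10.eIdem k n := by
  rw [Stmt10.eIdem_eq]
  rcases n with _ | t
  · simp [Stmt10.stair_zero, Stmt10.psiLongest_zero]
  · rw [Nat.add_sub_cancel, mul_assoc, ← mul_assoc (Stmt10.psiLongest k (t + 1) t),
      Stmt10.psiLongest_mul_stair_mul_psiLongest (Nat.lt_succ_self t)]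
end

section
/- Let p be a prime and k a field of characteristic p. On the nilHecke algebra NH_n over k, the derivation ∂ defined on generators by ∂(y_i) = y_i² and ∂(ψ_i) = −y_i ψ_i − ψ_i y_{i+1}, extended by the Leibniz rule, is well-defined (respects all nilHecke relations) and satisfies ∂^p = 0. -/
/-! The nilHecke algebra `NH n` over a field `k`, presented by generators
`y i` (for `i < n`) and `ψ i` (for `i + 1 < n`) and the nilHecke relations
(generators out of range are set to zero). Indices are 0-based: `ψ i` crosses
strands `i` and `i+1`. -/

namespace Stmt11

variable (k : Type*) [Field k]

/-- The distinguished generators of the free algebra: `Yf i` will become `y i`,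
`Pf i` will become `ψ i`. -/
def Yf (i : ℕ) : FreeAlgebra k (ℕ ⊕ ℕ) := FreeAlgebra.ι k (Sum.inl i)

def Pf (i : ℕ) : FreeAlgebra k (ℕ ⊕ ℕ) := FreeAlgebra.ι k (Sum.inr i)

/-- The defining relations of the nilHecke algebra `NH_n`. -/
inductive Rel (n : ℕ) : FreeAlgebra k (ℕ ⊕ ℕ) → FreeAlgebra k (ℕ ⊕ ℕ) → Prop
  | yy (i j : ℕ) : Rel n (Yf k i * Yf k j) (Yf k j * Yf k i)
  | ypsi (i j : ℕ) (h1 : i ≠ j) (h2 : i ≠ j + 1) :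
      Rel n (Yf k i * Pf k j) (Pf k j * Yf k i)
  | yp (i : ℕ) (h : i + 1 < n) : Rel n (Yf k i * Pf k i) (Pf k i * Yf k (i+1) + 1)
  | py (i : ℕ) (h : i + 1 < n) : Rel n (Pf k i * Yf k i) (Yf k (i+1) * Pf k i + 1)
  | psisq (i : ℕ) : Rel n (Pf k i * Pf k i) 0
  | far (i j : ℕ) (h : i + 1 < j) : Rel n (Pf k i * Pf k j) (Pf k j * Pf k i)
  | braid (i : ℕ) :
      Rel n (Pf k i * Pf k (i+1) * Pf k i) (Pf k (i+1) * Pf k i * Pf k (i+1))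
  | ybound (i : ℕ) (h : n ≤ i) : Rel n (Yf k i) 0
  | pbound (i : ℕ) (h : n ≤ i + 1) : Rel n (Pf k i) 0

/-- The nilHecke algebra on `n` strands. -/
abbrev NH (n : ℕ) := RingQuot (Rel k n)

/-- The dot generator `y i`. -/
def y (n i : ℕ) : NH k n := RingQuot.mkAlgHom k (Rel k n) (Yf k i)

/-- The crossing generator `ψ i`. -/
def psi (n i : ℕ) : NH k n := RingQuot.mkAlgHom k (Rel k n) (Pf k i)

/-- The product `ψ_L := ψ_{i₁} ⋯ ψ_{i_r}` along a list of indices. -/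
def psiList (n : ℕ) (L : List ℕ) : NH k n := (L.map (psi k n)).prod

/-- `ψ_{w₀}`: the nilHecke element of the longest permutation of `S_n`, defined by the
reduced word `(s_0)(s_1 s_0)(s_2 s_1 s_0)⋯(s_{n-2} ⋯ s_0)`. -/
def psiW0 (n : ℕ) : NH k n :=
  ((List.range (n-1)).map (fun m => psiList k n ((List.range (m+1)).reverse))).prod

/-- The element `e_n = y_0^{n-1} y_1^{n-2} ⋯ y_{n-1}^0 · ψ_{w₀}`. -/
def eIdem (n : ℕ) : NH k n :=
  ((List.range n).map (fun i => y k n i ^ (n - 1 - i))).prod * psiW0 k n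

end Stmt11

/-! The derivation is the `ε`-part of an algebra map `NH → NH[ε] = TrivSqZeroExt NH NH` sending
`y i ↦ y i + ε (y i)²` and `ψ i ↦ ψ i + ε ∂(ψ i)`; that it respects the nilHecke relations is
a direct computation in `NH`. In characteristic `p` the binomial coefficients `p.choose j`,
`0 < j < p`, vanish, so `∂^p` again satisfies the Leibniz rule and it suffices to check
`∂^p = 0` on generators: `∂^m y = m! y^(m+1)`, while `∂² ψ_i = 2 y_i ψ_i y_{i+1}` is killed
by `∂`. -/

namespace Stmt11

open Finset TrivSqZeroExt

section Leibniz

variable {R F : Type*} [Ring R] [FunLike F R R] [AddMonoidHomClass F R R] {D : F}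

theorem nsmul_eq_zero_of_dvd {p m : ℕ} (hpR : (p : R) = 0) (h : p ∣ m) (x : R) : m • x = 0 := by
  obtain ⟨c, rfl⟩ := h
  rw [nsmul_eq_mul, Nat.cast_mul, hpR, zero_mul, zero_mul]

theorem iterate_map_mul_of_leibniz (hD : ∀ a b : R, D (a * b) = D a * b + a * D b) (m : ℕ)
    (a b : R) :
    (⇑D)^[m] (a * b) =
      ∑ ij ∈ antidiagonal m, m.choose ij.1 • ((⇑D)^[ij.1] a * (⇑D)^[ij.2] b) := by
  induction m with
  | zero => simp
  | succ m ih =>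
    rw [sum_antidiagonal_choose_succ_nsmul (fun i j => (⇑D)^[i] a * (⇑D)^[j] b) m]
    simp only [Function.iterate_succ_apply', ih, map_sum, map_nsmul, hD, smul_add,
      sum_add_distrib]
    rw [add_comm]
    congr 1
    refine sum_congr rfl fun ij hij => ?_
    rw [m.choose_symm_of_eq_add (HasAntidiagonal.mem_antidiagonal.1 hij).symm]

theorem iterate_prime_map_mul_of_leibniz {p : ℕ} (hp : p.Prime) (hpR : (p : R) = 0)
    (hD : ∀ a b : R, D (a * b) = D a * b + a * D b) (a b : R) :
    (⇑D)^[p] (a * b) = (⇑D)^[p] a * b + a * (⇑D)^[p] b := by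
  rw [iterate_map_mul_of_leibniz hD,
    sum_eq_add_of_mem (p, 0) (0, p) (by simp) (by simp) (by simp [hp.ne_zero])]
  · simp
  · rintro ⟨i, j⟩ hij ⟨hne_p, hne_0⟩
    rw [HasAntidiagonal.mem_antidiagonal] at hij
    have hi0 : i ≠ 0 := by rintro rfl; simp_all
    have hip : i ≠ p := by rintro rfl; simp_all
    exact nsmul_eq_zero_of_dvd hpR (hp.dvd_choose_self hi0 (by omega)) _

theorem iterate_eq_factorial_smul_pow (hD : ∀ a b : R, D (a * b) = D a * b + a * D b) {x : R}
    (hx : D x = x * x) (m : ℕ) : (⇑D)^[m] x = m.factorial • x ^ (m + 1) := by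
  have hpow : ∀ j : ℕ, D (x ^ (j + 1)) = (j + 1) • x ^ (j + 2) := by
    intro j
    induction j with
    | zero => simp [hx, sq]
    | succ j ih =>
      rw [pow_succ, hD, ih, hx, smul_mul_assoc, ← pow_succ, ← mul_assoc, ← pow_succ, ← pow_succ,
        succ_nsmul _ (j + 1)]
  induction m with
  | zero => simp
  | succ m ih =>
    rw [Function.iterate_succ_apply', ih, map_nsmul, hpow, smul_smul, Nat.factorial_succ,
      mul_comm]

theorem iterate_prime_eq_zero_of_map_eq_sq {p : ℕ} (hp : p.Prime) (hpR : (p : R) = 0)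
    (hD : ∀ a b : R, D (a * b) = D a * b + a * D b) {x : R} (hx : D x = x * x) :
    (⇑D)^[p] x = 0 := by
  rw [iterate_eq_factorial_smul_pow hD hx]
  exact nsmul_eq_zero_of_dvd hpR (Nat.dvd_factorial hp.pos le_rfl) _

section Crossing

variable (hD : ∀ a b : R, D (a * b) = D a * b + a * D b) {x z a : R} (hx : D x = x * x)
  (hz : D z = z * z) (ha : D a = -(x * a) - a * z)
include hD hx hz ha

theorem iterate_two_eq_of_map_eq_neg_mul_sub_mul : (⇑D)^[2] a = 2 • (x * a * z) := by
  simp only [Function.iterate_succ_apply', Function.iterate_zero_apply, ha, map_sub, map_neg, hD,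
    hx, hz]
  noncomm_ring

theorem iterate_three_eq_zero_of_map_eq_neg_mul_sub_mul : (⇑D)^[3] a = 0 := by
  rw [Function.iterate_succ_apply', iterate_two_eq_of_map_eq_neg_mul_sub_mul hD hx hz ha,
    map_nsmul, hD, hD, hx, hz, ha]
  noncomm_ring

theorem iterate_prime_eq_zero_of_map_eq_neg_mul_sub_mul {p : ℕ} (hp : p.Prime)
    (hpR : (p : R) = 0) : (⇑D)^[p] a = 0 := by
  obtain rfl | hp3 := hp.two_le.eq_or_lt
  · rw [iterate_two_eq_of_map_eq_neg_mul_sub_mul hD hx hz ha]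
    exact nsmul_eq_zero_of_dvd hpR dvd_rfl _
  · rw [← Nat.sub_add_cancel hp3, Function.iterate_add_apply,
      iterate_three_eq_zero_of_map_eq_neg_mul_sub_mul hD hx hz ha, iterate_map_zero]

end Crossing

end Leibniz

section Relations

variable {k : Type*} [Field k] {n : ℕ}

theorem y_mul_y (i j : ℕ) : y k n i * y k n j = y k n j * y k n i := by
  simpa only [y, map_mul] using RingQuot.mkAlgHom_rel k (Rel.yy (k := k) (n := n) i j)

theorem y_mul_psi_of_ne {i j : ℕ} (h₁ : i ≠ j) (h₂ : i ≠ j + 1) :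
    y k n i * psi k n j = psi k n j * y k n i := by
  simpa only [y, psi, map_mul] using
    RingQuot.mkAlgHom_rel k (Rel.ypsi (k := k) (n := n) i j h₁ h₂)

theorem y_mul_psi_self {i : ℕ} (h : i + 1 < n) :
    y k n i * psi k n i = psi k n i * y k n (i + 1) + 1 := by
  simpa only [y, psi, map_mul, map_add, map_one] using
    RingQuot.mkAlgHom_rel k (Rel.yp (k := k) i h)

theorem psi_mul_y_self {i : ℕ} (h : i + 1 < n) :
    psi k n i * y k n i = y k n (i + 1) * psi k n i + 1 := by
  simpa only [y, psi, map_mul, map_add, map_one] using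
    RingQuot.mkAlgHom_rel k (Rel.py (k := k) i h)

theorem psi_mul_self (i : ℕ) : psi k n i * psi k n i = 0 := by
  simpa only [psi, map_mul, map_zero] using
    RingQuot.mkAlgHom_rel k (Rel.psisq (k := k) (n := n) i)

theorem psi_mul_psi_of_add_one_lt {i j : ℕ} (h : i + 1 < j) :
    psi k n i * psi k n j = psi k n j * psi k n i := by
  simpa only [psi, map_mul] using RingQuot.mkAlgHom_rel k (Rel.far (k := k) (n := n) i j h)

theorem psi_braid (i : ℕ) :
    psi k n i * psi k n (i + 1) * psi k n i = psi k n (i + 1) * psi k n i * psi k n (i + 1) := by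
  simpa only [psi, map_mul] using RingQuot.mkAlgHom_rel k (Rel.braid (k := k) (n := n) i)

theorem y_of_le {i : ℕ} (h : n ≤ i) : y k n i = 0 := by
  simpa only [y, map_zero] using RingQuot.mkAlgHom_rel k (Rel.ybound (k := k) i h)

theorem psi_of_le {i : ℕ} (h : n ≤ i + 1) : psi k n i = 0 := by
  simpa only [psi, map_zero] using RingQuot.mkAlgHom_rel k (Rel.pbound (k := k) i h)

end Relations

section Compatibility

variable {R : Type*} [Ring R]

theorem mul_mul_eq_of_mul_eq {a b c : R} (h : a * b = c) (t : R) : a * (b * t) = c * t := by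
  rw [← mul_assoc, h]

/-! Each identity below says that `x ↦ x + ε x²` on dots and `a ↦ a + ε (-(x a) - a z)` on a
crossing between dots `x` and `z` respect one nilHecke relation modulo `ε²`, given the relations
among the factors. -/

theorem leibniz_compat_yy {x z : R} (h : Commute x z) :
    x * (z * z) + (x * x) * z = z * (x * x) + (z * z) * x := by
  simp only [mul_assoc, h.left_comm, h.eq]
  abel

theorem leibniz_compat_ypsi {x a u v : R} (hxa : Commute x a) (hxu : Commute x u)
    (hxv : Commute x v) :
    x * (-(u * a) - a * v) + (x * x) * a = a * (x * x) + (-(u * a) - a * v) * x := by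
  simp only [mul_sub, sub_mul, mul_neg, neg_mul, mul_assoc, hxa.left_comm, hxu.left_comm, hxa.eq,
    hxv.eq]
  abel

theorem leibniz_compat_yp (x z a : R) :
    x * (-(x * a) - a * z) + (x * x) * a = a * (z * z) + (-(x * a) - a * z) * z := by
  noncomm_ring

theorem leibniz_compat_py {x z a : R} (hxa : x * a = a * z + 1) (hax : a * x = z * a + 1)
    (hxz : Commute x z) :
    a * (x * x) + (-(x * a) - a * z) * x = z * (-(x * a) - a * z) + (z * z) * a := by
  have haz : a * z = x * a - 1 := eq_sub_of_add_eq hxa.symm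
  simp only [mul_sub, sub_mul, mul_neg, neg_mul, mul_assoc, haz, hax, mul_mul_eq_of_mul_eq hax,
    hxz.symm.left_comm, mul_add, add_mul, mul_one, one_mul]
  abel

theorem leibniz_compat_psisq {x z a : R} (hxa : x * a = a * z + 1) (hax : a * x = z * a + 1)
    (ha : a * a = 0) :
    a * (-(x * a) - a * z) + (-(x * a) - a * z) * a = 0 := by
  have haz : a * z = x * a - 1 := eq_sub_of_add_eq hxa.symm
  simp only [mul_sub, sub_mul, mul_neg, neg_mul, mul_assoc, haz, ha, mul_mul_eq_of_mul_eq hax,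
    add_mul, mul_one, one_mul, mul_zero]
  abel

theorem leibniz_compat_far {a b x z u v : R} (hab : Commute b a) (hxb : Commute b x)
    (hzb : Commute b z) (hua : Commute u a) (hva : Commute v a) :
    a * (-(u * b) - b * v) + (-(x * a) - a * z) * b
      = b * (-(x * a) - a * z) + (-(u * b) - b * v) * a := by
  simp only [mul_sub, sub_mul, mul_neg, neg_mul, mul_assoc, hab.left_comm, hxb.left_comm,
    hua.left_comm, hab.eq, hzb.eq, hva.eq]
  abel

theorem leibniz_compat_braid {a b x z w : R} (hxa : x * a = a * z + 1) (hax : a * x = z * a + 1)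
    (hzb : z * b = b * w + 1) (hxb : Commute b x) (ha : a * a = 0) (hb : b * b = 0)
    (hbr : a * (b * a) = b * (a * b)) :
    a * b * (-(x * a) - a * z) + (a * (-(z * b) - b * w) + (-(x * a) - a * z) * b) * a
      = b * a * (-(z * b) - b * w) + (b * (-(x * a) - a * z) + (-(z * b) - b * w) * a) * b := by
  have haz : a * z = x * a - 1 := eq_sub_of_add_eq hxa.symm
  have hbw : b * w = z * b - 1 := eq_sub_of_add_eq hzb.symm
  simp only [mul_sub, sub_mul, add_mul, mul_neg, neg_mul, mul_assoc]
  simp only [haz, hbw, ha, hb, hbr, mul_mul_eq_of_mul_eq haz, mul_mul_eq_of_mul_eq hax,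
    mul_mul_eq_of_mul_eq hbw, hxb.left_comm, mul_sub, sub_mul, add_mul, mul_one, one_mul,
    mul_assoc]
  abel

end Compatibility

section DualNumbers

variable {k : Type*} [Field k] {n : ℕ}

variable (k n) in
noncomputable def dualLift : FreeAlgebra k (ℕ ⊕ ℕ) →ₐ[k] TrivSqZeroExt (NH k n) (NH k n) :=
  FreeAlgebra.lift k <| Sum.elim
    (fun i => inl (y k n i) + inr (y k n i * y k n i))
    (fun i => inl (psi k n i) + inr (-(y k n i * psi k n i) - psi k n i * y k n (i + 1)))

@[simp]
theorem dualLift_Yf (i : ℕ) :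
    dualLift k n (Yf k i) = inl (y k n i) + inr (y k n i * y k n i) := by
  simp [dualLift, Yf]

@[simp]
theorem dualLift_Pf (i : ℕ) :
    dualLift k n (Pf k i) =
      inl (psi k n i) + inr (-(y k n i * psi k n i) - psi k n i * y k n (i + 1)) := by
  simp [dualLift, Pf]

theorem fst_dualLift (u : FreeAlgebra k (ℕ ⊕ ℕ)) :
    (dualLift k n u).fst = RingQuot.mkAlgHom k (Rel k n) u := by
  suffices (fstHom k (NH k n) (NH k n)).comp (dualLift k n) = RingQuot.mkAlgHom k (Rel k n) from
    AlgHom.congr_fun this u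
  ext (i | i) <;> simp [dualLift, y, psi, Yf, Pf]

theorem dualLift_eq_of_rel ⦃u v : FreeAlgebra k (ℕ ⊕ ℕ)⦄ (h : Rel k n u v) :
    dualLift k n u = dualLift k n v := by
  refine TrivSqZeroExt.ext (by rw [fst_dualLift, fst_dualLift, RingQuot.mkAlgHom_rel k h]) ?_
  induction h <;>
    simp only [map_mul, map_add, map_one, map_zero, snd_mul, fst_mul, snd_add, fst_add, snd_one,
      snd_zero, dualLift_Yf, dualLift_Pf, fst_inl, fst_inr, snd_inl, snd_inr, add_zero,
      zero_add, smul_eq_mul, op_smul_eq_mul]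
  case yy i j => exact leibniz_compat_yy (y_mul_y i j)
  case ypsi i j h₁ h₂ =>
    exact leibniz_compat_ypsi (y_mul_psi_of_ne h₁ h₂) (y_mul_y i j) (y_mul_y i (j + 1))
  case yp i h => exact leibniz_compat_yp _ _ _
  case py i h =>
    exact leibniz_compat_py (y_mul_psi_self h) (psi_mul_y_self h) (y_mul_y i (i + 1))
  case psisq i =>
    by_cases h : i + 1 < n
    · exact leibniz_compat_psisq (y_mul_psi_self h) (psi_mul_y_self h) (psi_mul_self i)
    · simp [psi_of_le (not_lt.1 h)]
  case far i j h =>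
    exact leibniz_compat_far (psi_mul_psi_of_add_one_lt h).symm
      (y_mul_psi_of_ne (by omega) (by omega)).symm (y_mul_psi_of_ne (by omega) (by omega)).symm
      (y_mul_psi_of_ne (by omega) (by omega)) (y_mul_psi_of_ne (by omega) (by omega))
  case braid i =>
    by_cases h : i + 2 < n
    · exact leibniz_compat_braid (y_mul_psi_self (by omega)) (psi_mul_y_self (by omega))
        (y_mul_psi_self h) (y_mul_psi_of_ne (by omega) (by omega)).symm (psi_mul_self i)
        (psi_mul_self (i + 1)) (by simpa only [mul_assoc] using psi_braid (k := k) (n := n) i)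
    · simp [psi_of_le (show n ≤ i + 1 + 1 by omega)]
  case ybound i h => simp [y_of_le h]
  case pbound i h => simp [psi_of_le h]

variable (k n) in
noncomputable def dualHom : NH k n →ₐ[k] TrivSqZeroExt (NH k n) (NH k n) :=
  RingQuot.liftAlgHom k ⟨dualLift k n, dualLift_eq_of_rel⟩

@[simp]
theorem dualHom_mkAlgHom (u : FreeAlgebra k (ℕ ⊕ ℕ)) :
    dualHom k n (RingQuot.mkAlgHom k (Rel k n) u) = dualLift k n u :=
  RingQuot.liftAlgHom_mkAlgHom_apply k _ _ u

@[simp]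
theorem fst_dualHom (x : NH k n) : (dualHom k n x).fst = x := by
  obtain ⟨u, rfl⟩ := RingQuot.mkAlgHom_surjective k (Rel k n) x
  rw [dualHom_mkAlgHom, fst_dualLift]

variable (k n) in
noncomputable def nhDeriv : NH k n →ₗ[k] NH k n where
  toFun x := (dualHom k n x).snd
  map_add' x x' := by simp
  map_smul' c x := by simp

theorem nhDeriv_mul (a b : NH k n) :
    nhDeriv k n (a * b) = nhDeriv k n a * b + a * nhDeriv k n b := by
  simp [nhDeriv, add_comm]

theorem nhDeriv_y (i : ℕ) : nhDeriv k n (y k n i) = y k n i * y k n i := by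
  simp [nhDeriv, y]

theorem nhDeriv_psi (i : ℕ) :
    nhDeriv k n (psi k n i) = -(y k n i * psi k n i) - psi k n i * y k n (i + 1) := by
  simp [nhDeriv, psi]

end DualNumbers

theorem linearMap_eq_zero_of_leibniz {k : Type*} [Field k] {n : ℕ} (E : NH k n →ₗ[k] NH k n)
    (hE : ∀ a b, E (a * b) = E a * b + a * E b) (hy : ∀ i, E (y k n i) = 0)
    (hpsi : ∀ i, E (psi k n i) = 0) : E = 0 := by
  have h1 : E 1 = 0 := by simpa using hE 1 1
  ext x
  obtain ⟨u, rfl⟩ := RingQuot.mkAlgHom_surjective k (Rel k n) x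
  induction u using FreeAlgebra.induction with
  | grade0 r => simp [Algebra.algebraMap_eq_smul_one, h1]
  | grade1 s => rcases s with i | i; exacts [hy i, hpsi i]
  | mul a b ha hb => simp [hE, ha, hb]
  | add a b ha hb => simp [ha, hb]

theorem nhDeriv_pow_eq_zero {k : Type*} [Field k] (p : ℕ) [Fact p.Prime] [CharP k p] (n : ℕ) :
    nhDeriv k n ^ p = 0 := by
  have hp : p.Prime := Fact.out
  have hpNH : (p : NH k n) = 0 := by
    rw [← map_natCast (algebraMap k (NH k n)), CharP.cast_eq_zero, map_zero]
  refine linearMap_eq_zero_of_leibniz _ (fun a b => ?_) (fun i => ?_) (fun i => ?_) <;>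
    simp only [Module.End.pow_apply]
  · exact iterate_prime_map_mul_of_leibniz hp hpNH nhDeriv_mul a b
  · exact iterate_prime_eq_zero_of_map_eq_sq hp hpNH nhDeriv_mul (nhDeriv_y i)
  · exact iterate_prime_eq_zero_of_map_eq_neg_mul_sub_mul nhDeriv_mul (nhDeriv_y i)
      (nhDeriv_y (i + 1)) (nhDeriv_psi i) hp hpNH

end Stmt11

/-- Let `p` be a prime and `k` a field of characteristic `p`.  On the
nilHecke algebra `NH_n` over `k`, the derivation `∂` defined on generators by
`∂(y i) = (y i)²` and `∂(ψ i) = −(y i)(ψ i) − (ψ i)(y (i+1))`, extended by the Leibniz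
rule, is well-defined (respects all nilHecke relations) and satisfies `∂^p = 0`: i.e.
there exists a `k`-linear map `D` on `NH_n` satisfying the Leibniz rule, taking the
prescribed values on the generators, with `D^[p] = 0`. -/
theorem stmt_11 (k : Type*) [Field k] (p : ℕ) [Fact p.Prime] [CharP k p] (n : ℕ) :
    ∃ D : Stmt11.NH k n →ₗ[k] Stmt11.NH k n,
      (∀ a b : Stmt11.NH k n, D (a * b) = D a * b + a * D b) ∧
      (∀ i : ℕ, D (Stmt11.y k n i) = Stmt11.y k n i * Stmt11.y k n i) ∧
      (∀ i : ℕ, D (Stmt11.psi k n i) =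
        -(Stmt11.y k n i * Stmt11.psi k n i) - Stmt11.psi k n i * Stmt11.y k n (i+1)) ∧
      (∀ x : Stmt11.NH k n, (⇑D)^[p] x = 0) := by
  refine ⟨Stmt11.nhDeriv k n, Stmt11.nhDeriv_mul, Stmt11.nhDeriv_y, Stmt11.nhDeriv_psi,
    fun x => ?_⟩
  rw [← Module.End.pow_apply, Stmt11.nhDeriv_pow_eq_zero p n, LinearMap.zero_apply]
end

section
/- In the nilHecke algebra NH_n with p-differential ∂ (where ∂(y_i) = y_i², ∂(ψ_i) = −y_i ψ_i − ψ_i y_{i+1}), the idempotent e_n = y_1^{n-1} ⋯ y_n^0 ψ_{w_0} satisfies ∂(e_n) = −e_n · Σ_{i=1}^n (i−1) y_i. Consequently the right ideal e_n NH_n is closed under ∂. -/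
/-! The nilHecke algebra `NH n` over a field `k`, presented by generators
`y i` (for `i < n`) and `ψ i` (for `i + 1 < n`) and the nilHecke relations
(generators out of range are set to zero). Indices are 0-based: `ψ i` crosses
strands `i` and `i+1`. -/

namespace Stmt12

variable (k : Type*) [Field k]

/-- The distinguished generators of the free algebra: `Yf i` will become `y i`,
`Pf i` will become `ψ i`. -/
def Yf (i : ℕ) : FreeAlgebra k (ℕ ⊕ ℕ) := FreeAlgebra.ι k (Sum.inl i)

def Pf (i : ℕ) : FreeAlgebra k (ℕ ⊕ ℕ) := FreeAlgebra.ι k (Sum.inr i)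

/-- The defining relations of the nilHecke algebra `NH_n`. -/
inductive Rel (n : ℕ) : FreeAlgebra k (ℕ ⊕ ℕ) → FreeAlgebra k (ℕ ⊕ ℕ) → Prop
  | yy (i j : ℕ) : Rel n (Yf k i * Yf k j) (Yf k j * Yf k i)
  | ypsi (i j : ℕ) (h1 : i ≠ j) (h2 : i ≠ j + 1) :
      Rel n (Yf k i * Pf k j) (Pf k j * Yf k i)
  | yp (i : ℕ) (h : i + 1 < n) : Rel n (Yf k i * Pf k i) (Pf k i * Yf k (i+1) + 1)
  | py (i : ℕ) (h : i + 1 < n) : Rel n (Pf k i * Yf k i) (Yf k (i+1) * Pf k i + 1)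
  | psisq (i : ℕ) : Rel n (Pf k i * Pf k i) 0
  | far (i j : ℕ) (h : i + 1 < j) : Rel n (Pf k i * Pf k j) (Pf k j * Pf k i)
  | braid (i : ℕ) :
      Rel n (Pf k i * Pf k (i+1) * Pf k i) (Pf k (i+1) * Pf k i * Pf k (i+1))
  | ybound (i : ℕ) (h : n ≤ i) : Rel n (Yf k i) 0
  | pbound (i : ℕ) (h : n ≤ i + 1) : Rel n (Pf k i) 0

/-- The nilHecke algebra on `n` strands. -/
abbrev NH (n : ℕ) := RingQuot (Rel k n)

/-- The dot generator `y i`. -/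
def y (n i : ℕ) : NH k n := RingQuot.mkAlgHom k (Rel k n) (Yf k i)

/-- The crossing generator `ψ i`. -/
def psi (n i : ℕ) : NH k n := RingQuot.mkAlgHom k (Rel k n) (Pf k i)

/-- The product `ψ_L := ψ_{i₁} ⋯ ψ_{i_r}` along a list of indices. -/
def psiList (n : ℕ) (L : List ℕ) : NH k n := (L.map (psi k n)).prod

/-- `ψ_{w₀}`: the nilHecke element of the longest permutation of `S_n`, defined by the
reduced word `(s_0)(s_1 s_0)(s_2 s_1 s_0)⋯(s_{n-2} ⋯ s_0)`. -/
def psiW0 (n : ℕ) : NH k n :=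
  ((List.range (n-1)).map (fun m => psiList k n ((List.range (m+1)).reverse))).prod

/-- The element `e_n = y_0^{n-1} y_1^{n-2} ⋯ y_{n-1}^0 · ψ_{w₀}`. -/
def eIdem (n : ℕ) : NH k n :=
  ((List.range n).map (fun i => y k n i ^ (n - 1 - i))).prod * psiW0 k n

end Stmt12


/-!
Write `S_m = Σ_{i<m} i y_i`, `Z_m = Σ_{i<m} y_i`, `c_m = ψ_{m-1} ⋯ ψ_0`, and let `e_m` be the
analogue of `e_n` on the first `m` strands, so that `e_{m+1} = (y_0 ⋯ y_{m-1}) e_m c_m`.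
Say that `∂x ≡ A x - x B` when the two sides differ by an explicit error term; these relations
compose along products. One finds `∂c_m ≡ (S_m - Z_m) c_m - c_m S_{m+1}` with an error in the
right ideal generated by `ψ_0, …, ψ_{m-2}`, which is killed by `ψ_{w₀}` of `S_m` on the left.
Since the symmetric element `Z_m` commutes with `e_m`, induction on `m` gives `∂e_m = -e_m S_m`.
-/

section Leibniz

variable {R : Type*} [Ring R] {D : R → R} (hD : ∀ a b, D (a * b) = D a * b + a * D b)
include hD

theorem leibniz_map_one : D 1 = 0 := by
  simpa using hD 1 1

theorem leibniz_map_mul_of_eq_neg_mul {e S : R} (he : D e = -(e * S)) (z : R) :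
    D (e * z) = e * (-(S * z) + D z) := by
  rw [hD, he]
  noncomm_ring

theorem leibniz_map_mul_of_eq {x z A B C r s : R} (hx : D x = A * x - x * B + r)
    (hz : D z = B * z - z * C + s) :
    D (x * z) = A * (x * z) - x * z * C + (r * z + x * s) := by
  rw [hD, hx, hz]
  noncomm_ring

end Leibniz

namespace NilHecke

open Stmt12 Finset

variable {k : Type*} [Field k] {n : ℕ}

theorem commute_y_y (i j : ℕ) : Commute (y k n i) (y k n j) :=
  (commute_iff_eq _ _).mpr <| by
    simpa only [y, map_mul] using RingQuot.mkAlgHom_rel k (Rel.yy (k := k) (n := n) i j)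

theorem commute_y_psi {i j : ℕ} (h₁ : i ≠ j) (h₂ : i ≠ j + 1) :
    Commute (y k n i) (psi k n j) := (commute_iff_eq _ _).mpr <| by
  simpa only [y, psi, map_mul] using
    RingQuot.mkAlgHom_rel k (Rel.ypsi (k := k) (n := n) i j h₁ h₂)

theorem y_mul_psi_self {i : ℕ} (h : i + 1 < n) :
    y k n i * psi k n i = psi k n i * y k n (i + 1) + 1 := by
  simpa only [y, psi, map_mul, map_add, map_one] using
    RingQuot.mkAlgHom_rel k (Rel.yp (k := k) i h)

theorem psi_mul_y_self {i : ℕ} (h : i + 1 < n) :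
    psi k n i * y k n i = y k n (i + 1) * psi k n i + 1 := by
  simpa only [y, psi, map_mul, map_add, map_one] using
    RingQuot.mkAlgHom_rel k (Rel.py (k := k) i h)

theorem psi_mul_psi_self (i : ℕ) : psi k n i * psi k n i = 0 := by
  simpa only [psi, map_mul, map_zero] using
    RingQuot.mkAlgHom_rel k (Rel.psisq (k := k) (n := n) i)

theorem commute_psi_psi {i j : ℕ} (h : i + 1 < j) : Commute (psi k n i) (psi k n j) :=
  (commute_iff_eq _ _).mpr <| by
    simpa only [psi, map_mul] using RingQuot.mkAlgHom_rel k (Rel.far (k := k) (n := n) i j h)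

theorem psi_braid (i : ℕ) :
    psi k n i * psi k n (i + 1) * psi k n i
      = psi k n (i + 1) * psi k n i * psi k n (i + 1) := by
  simpa only [psi, map_mul] using RingQuot.mkAlgHom_rel k (Rel.braid (k := k) (n := n) i)

section Definitions

variable (k n)

def psiCycle (m : ℕ) : NH k n := psiList k n (List.range m).reverse

def psiLongest (m : ℕ) : NH k n :=
  ((List.range (m - 1)).map fun t => psiCycle k n (t + 1)).prod

def yProd (m : ℕ) : NH k n := ((List.range m).map (y k n)).prod

def yStaircase (m : ℕ) : NH k n := ((List.range m).map fun i => y k n i ^ (m - 1 - i)).prod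

def eFirst (m : ℕ) : NH k n := yStaircase k n m * psiLongest k n m

def ySum (m : ℕ) : NH k n := ∑ i ∈ range m, y k n i

def yWeightedSum (m : ℕ) : NH k n := ∑ i ∈ range m, i • y k n i

/-- The error term in `∂c_m ≡ (S_m - Z_m) c_m - c_m S_{m+1}`. -/
def cycleError : ℕ → NH k n
  | 0 => 0
  | m + 1 => psi k n m * cycleError m - m • psiCycle k n m

def psiRightIdeal (m : ℕ) : Submodule k (NH k n) :=
  Submodule.span k {x | ∃ j a, j + 1 < m ∧ x = psi k n j * a}

end Definitions

theorem psiCycle_zero : psiCycle k n 0 = 1 := rfl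

theorem psiCycle_succ (m : ℕ) : psiCycle k n (m + 1) = psi k n m * psiCycle k n m := by
  simp [psiCycle, psiList, List.range_succ]

theorem psiLongest_succ (m : ℕ) :
    psiLongest k n (m + 1) = psiLongest k n m * psiCycle k n m := by
  cases m with
  | zero => simp [psiLongest, psiCycle, psiList]
  | succ j => simp [psiLongest, List.range_succ]

theorem yProd_succ (m : ℕ) : yProd k n (m + 1) = yProd k n m * y k n m := by
  simp [yProd, List.range_succ]

theorem ySum_succ (m : ℕ) : ySum k n (m + 1) = ySum k n m + y k n m :=
  sum_range_succ _ _

theorem yWeightedSum_succ (m : ℕ) :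
    yWeightedSum k n (m + 1) = yWeightedSum k n m + m • y k n m :=
  sum_range_succ _ _

theorem commute_y_prod_pow (j : ℕ) (a : ℕ → ℕ) (l : List ℕ) :
    Commute (y k n j) (l.map fun i => y k n i ^ a i).prod :=
  Commute.list_prod_right _ _ fun _ hx ↦ by
    obtain ⟨i, -, rfl⟩ := List.mem_map.mp hx
    exact (commute_y_y j i).pow_right _

theorem yProd_mul_prod_pow (a : ℕ → ℕ) (m : ℕ) :
    yProd k n m * ((List.range m).map fun i => y k n i ^ a i).prod
      = ((List.range m).map fun i => y k n i ^ (a i + 1)).prod := by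
  induction m with
  | zero => simp [yProd]
  | succ m ih =>
    simp only [yProd_succ, List.range_succ, List.map_append, List.prod_append, List.map_cons,
      List.map_nil, List.prod_cons, List.prod_nil, mul_one]
    rw [mul_assoc, ← mul_assoc (y k n m), (commute_y_prod_pow m a _).eq, mul_assoc,
      ← mul_assoc, ih, ← pow_succ']

theorem yStaircase_succ (m : ℕ) : yStaircase k n (m + 1) = yProd k n m * yStaircase k n m := by
  rw [yStaircase, yStaircase, yProd_mul_prod_pow, List.range_succ, List.map_append,
    List.prod_append]
  simp only [List.map_cons, List.map_nil, List.prod_cons, List.prod_nil, Nat.add_sub_cancel,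
    Nat.sub_self, pow_zero, mul_one]
  refine congrArg List.prod (List.map_congr_left fun i hi ↦ ?_)
  rw [List.mem_range] at hi
  congr 1
  omega

theorem eFirst_zero : eFirst k n 0 = 1 := by
  simp [eFirst, yStaircase, psiLongest]

theorem eFirst_succ (m : ℕ) :
    eFirst k n (m + 1) = yProd k n m * eFirst k n m * psiCycle k n m := by
  rw [eFirst, eFirst, yStaircase_succ, psiLongest_succ, mul_assoc, mul_assoc, mul_assoc]

theorem eFirst_self : eFirst k n n = eIdem k n := rfl

theorem commute_psi_psiCycle {m j : ℕ} (h : m < j) : Commute (psi k n j) (psiCycle k n m) := by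
  induction m with
  | zero => exact Commute.one_right _
  | succ t ih =>
    rw [psiCycle_succ]
    exact ((commute_psi_psi h).symm).mul_right (ih (by omega))

theorem commute_y_psiCycle {m j : ℕ} (h : m < j) : Commute (y k n j) (psiCycle k n m) := by
  induction m with
  | zero => exact Commute.one_right _
  | succ t ih =>
    rw [psiCycle_succ]
    exact (commute_y_psi (by omega) (by omega)).mul_right (ih (by omega))

theorem psiCycle_mul_psi_succ {M j : ℕ} (h : j + 1 < M) :
    psiCycle k n M * psi k n (j + 1) = psi k n j * psiCycle k n M := by
  induction M with
  | zero => omega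
  | succ M ih =>
    rcases Nat.lt_or_ge (j + 1) M with hlt | hge
    · rw [psiCycle_succ, mul_assoc, ih hlt, ← mul_assoc, ← (commute_psi_psi hlt).eq, mul_assoc]
    · obtain rfl : M = j + 1 := by omega
      rw [psiCycle_succ, psiCycle_succ, mul_assoc, mul_assoc,
        ← (commute_psi_psiCycle (Nat.lt_succ_self j)).eq, ← mul_assoc, ← mul_assoc,
        ← psi_braid, mul_assoc, mul_assoc]

theorem psiCycle_mul_psi_zero {M : ℕ} (h : 1 ≤ M) : psiCycle k n M * psi k n 0 = 0 := by
  induction M with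
  | zero => omega
  | succ M ih =>
    rcases Nat.eq_zero_or_pos M with rfl | hM
    · rw [psiCycle_succ, psiCycle_zero, mul_one, psi_mul_psi_self]
    · rw [psiCycle_succ, mul_assoc, ih hM, mul_zero]

theorem psiLongest_mul_psi {m j : ℕ} (h : j + 1 < m) : psiLongest k n m * psi k n j = 0 := by
  induction m generalizing j with
  | zero => omega
  | succ m ih =>
    rw [psiLongest_succ, mul_assoc]
    cases j with
    | zero => rw [psiCycle_mul_psi_zero (by omega), mul_zero]
    | succ j => rw [psiCycle_mul_psi_succ (by omega), ← mul_assoc, ih (by omega), zero_mul]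

theorem psiLongest_mul_eq_zero {m : ℕ} {x : NH k n} (hx : x ∈ psiRightIdeal k n m) :
    psiLongest k n m * x = 0 := by
  induction hx using Submodule.span_induction with
  | mem x hx =>
    obtain ⟨j, a, hj, rfl⟩ := hx
    rw [← mul_assoc, psiLongest_mul_psi hj, zero_mul]
  | zero => rw [mul_zero]
  | add x z _ _ hx hz => rw [mul_add, hx, hz, add_zero]
  | smul c x _ hx => rw [mul_smul_comm, hx, smul_zero]

theorem psi_mul_mem_psiRightIdeal {m : ℕ} {x : NH k n} (hx : x ∈ psiRightIdeal k n m) :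
    psi k n m * x ∈ psiRightIdeal k n (m + 1) := by
  induction hx using Submodule.span_induction with
  | mem x hx =>
    obtain ⟨i, a, hi, rfl⟩ := hx
    rw [← mul_assoc, ← (commute_psi_psi hi).eq, mul_assoc]
    exact Submodule.subset_span ⟨i, _, by omega, rfl⟩
  | zero => rw [mul_zero]; exact zero_mem _
  | add x z _ _ hx hz => rw [mul_add]; exact add_mem hx hz
  | smul c x _ hx => rw [mul_smul_comm]; exact Submodule.smul_mem _ _ hx

theorem psiCycle_mem_psiRightIdeal {m : ℕ} (hm : 1 ≤ m) :
    psiCycle k n m ∈ psiRightIdeal k n (m + 1) := by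
  obtain ⟨t, rfl⟩ : ∃ t, m = t + 1 := ⟨m - 1, by omega⟩
  rw [psiCycle_succ]
  exact Submodule.subset_span ⟨t, _, by omega, rfl⟩

theorem cycleError_mem_psiRightIdeal (m : ℕ) : cycleError k n m ∈ psiRightIdeal k n m := by
  induction m with
  | zero => exact zero_mem _
  | succ m ih =>
    refine sub_mem (psi_mul_mem_psiRightIdeal ih) ?_
    rcases Nat.eq_zero_or_pos m with rfl | hm
    · rw [zero_smul]; exact zero_mem _
    · exact Submodule.smul_of_tower_mem _ _ (psiCycle_mem_psiRightIdeal hm)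

theorem eFirst_mul_cycleError (m : ℕ) : eFirst k n m * cycleError k n m = 0 := by
  rw [eFirst, mul_assoc, psiLongest_mul_eq_zero (cycleError_mem_psiRightIdeal m), mul_zero]

theorem commute_psi_ySum {m j : ℕ} (h : m ≤ j) : Commute (psi k n j) (ySum k n m) :=
  Commute.sum_right _ _ _ fun i hi ↦
    have hi := mem_range.mp hi
    (commute_y_psi (by omega) (by omega)).symm

theorem commute_psi_yWeightedSum {m j : ℕ} (h : m ≤ j) :
    Commute (psi k n j) (yWeightedSum k n m) :=
  Commute.sum_right _ _ _ fun i hi ↦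
    have hi := mem_range.mp hi
    (commute_y_psi (by omega) (by omega)).symm.smul_right _

/-- `y_t + y_{t+1}` is symmetric, hence commutes with `ψ_t`. -/
theorem commute_ySum_psi {t m : ℕ} (ht : t + 1 < m) (hm : m ≤ n) :
    Commute (ySum k n m) (psi k n t) := by
  have hpair : ({t, t + 1} : Finset ℕ) ⊆ range m := by
    intro x hx
    simp only [mem_insert, mem_singleton, mem_range] at hx ⊢
    omega
  have hsplit :
      ySum k n m = ∑ i ∈ range m \ {t, t + 1}, y k n i + (y k n t + y k n (t + 1)) := by
    rw [ySum, ← sum_sdiff hpair, sum_pair (by omega)]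
  rw [hsplit]
  refine Commute.add_left (Commute.sum_left _ _ _ fun i hi ↦ ?_) ?_
  · simp only [mem_sdiff, mem_insert, mem_singleton, not_or] at hi
    exact commute_y_psi hi.2.1 hi.2.2
  · rw [commute_iff_eq, add_mul, mul_add, y_mul_psi_self (by omega), psi_mul_y_self (by omega)]
    abel

theorem commute_ySum_psiCycle {j m : ℕ} (hj : j < m) (hm : m ≤ n) :
    Commute (ySum k n m) (psiCycle k n j) := by
  induction j with
  | zero => exact Commute.one_right _
  | succ t ih =>
    rw [psiCycle_succ]
    exact (commute_ySum_psi hj hm).mul_right (ih (by omega))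

theorem commute_ySum_psiLongest {m : ℕ} (hm : m ≤ n) :
    Commute (ySum k n m) (psiLongest k n m) :=
  Commute.list_prod_right _ _ fun x hx ↦ by
    obtain ⟨t, ht, rfl⟩ := List.mem_map.mp hx
    exact commute_ySum_psiCycle (by rw [List.mem_range] at ht; omega) hm

theorem commute_ySum_yStaircase (m j : ℕ) : Commute (ySum k n m) (yStaircase k n j) :=
  Commute.sum_left _ _ _ fun i _ ↦ commute_y_prod_pow i _ _

theorem commute_y_yProd (i j : ℕ) : Commute (y k n i) (yProd k n j) :=
  Commute.list_prod_right _ _ fun x hx ↦ by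
    obtain ⟨l, -, rfl⟩ := List.mem_map.mp hx
    exact commute_y_y i l

theorem commute_ySum_yProd (m j : ℕ) : Commute (ySum k n m) (yProd k n j) :=
  Commute.sum_left _ _ _ fun i _ ↦ commute_y_yProd i j

theorem commute_ySum_eFirst {m : ℕ} (hm : m ≤ n) : Commute (ySum k n m) (eFirst k n m) :=
  (commute_ySum_yStaircase m m).mul_right (commute_ySum_psiLongest hm)

section Derivative

variable {D : NH k n → NH k n} (hD : ∀ a b, D (a * b) = D a * b + a * D b)
  (hy : ∀ i, D (y k n i) = y k n i * y k n i)
  (hpsi : ∀ i, D (psi k n i) = -(y k n i * psi k n i) - psi k n i * y k n (i + 1))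

include hD hy in
theorem map_yProd (m : ℕ) : D (yProd k n m) = ySum k n m * yProd k n m := by
  induction m with
  | zero => simp [yProd, ySum, leibniz_map_one hD]
  | succ m ih =>
    rw [yProd_succ, hD, ih, hy, ySum_succ, (commute_y_yProd m m).symm.left_comm, add_mul,
      mul_assoc]

include hpsi in
theorem map_psi {m : ℕ} (hm : m + 1 < n) :
    D (psi k n m) = (yWeightedSum k n (m + 1) - ySum k n (m + 1)) * psi k n m
      - psi k n m * (yWeightedSum k n m - ySum k n m + (m + 1) • y k n (m + 1))
      + -(m : NH k n) := by
  rw [hpsi, yWeightedSum_succ, ySum_succ]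
  simp only [mul_add, mul_sub, add_mul, sub_mul, smul_mul_assoc, mul_smul_comm,
    (commute_psi_yWeightedSum le_rfl).eq, (commute_psi_ySum le_rfl).eq, y_mul_psi_self hm,
    smul_add, add_smul, one_smul, nsmul_one]
  abel

include hD hpsi in
theorem map_psiCycle {m : ℕ} (hm : m < n) :
    D (psiCycle k n m) = (yWeightedSum k n m - ySum k n m) * psiCycle k n m
      - psiCycle k n m * yWeightedSum k n (m + 1) + cycleError k n m := by
  induction m with
  | zero => simp [psiCycle_zero, yWeightedSum, ySum, cycleError, leibniz_map_one hD]
  | succ m ih =>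
    have hcycle : D (psiCycle k n m)
        = (yWeightedSum k n m - ySum k n m + (m + 1) • y k n (m + 1)) * psiCycle k n m
          - psiCycle k n m * yWeightedSum k n (m + 2) + cycleError k n m := by
      rw [ih (by omega), yWeightedSum_succ (m + 1), add_mul, mul_add, smul_mul_assoc,
        mul_smul_comm, (commute_y_psiCycle (Nat.lt_succ_self m)).eq]
      abel
    -- `neg_mul` needs `α`: unification cannot find its instance from `RingQuot`'s own `Neg`.
    rw [psiCycle_succ, leibniz_map_mul_of_eq hD (map_psi hpsi hm) hcycle, cycleError,
      neg_mul (α := NH k n), ← nsmul_eq_mul, neg_add_eq_sub]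

include hD hy hpsi in
theorem map_eFirst {m : ℕ} (hm : m ≤ n) :
    D (eFirst k n m) = -(eFirst k n m * yWeightedSum k n m) := by
  induction m with
  | zero => simp [eFirst_zero, yWeightedSum, leibniz_map_one hD]
  | succ m ih =>
    have hprod : D (yProd k n m) = 0 * yProd k n m - yProd k n m * -ySum k n m + 0 := by
      rw [map_yProd hD hy, (commute_ySum_yProd m m).eq, zero_mul, zero_sub,
        mul_neg (α := NH k n), neg_neg, add_zero]
    have he : D (eFirst k n m)
        = -ySum k n m * eFirst k n m - eFirst k n m * (yWeightedSum k n m - ySum k n m) + 0 := by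
      rw [ih (by omega), neg_mul (α := NH k n), (commute_ySum_eFirst (by omega)).eq, mul_sub]
      abel
    rw [eFirst_succ, leibniz_map_mul_of_eq hD (leibniz_map_mul_of_eq hD hprod he)
      (map_psiCycle hD hpsi (by omega)),
      mul_assoc (yProd k n m) (eFirst k n m) (cycleError k n m), eFirst_mul_cycleError]
    simp

end Derivative

end NilHecke

open Stmt12 in
theorem stmt_12_general (k : Type*) [Field k] (n : ℕ)
    (D : NH k n →ₗ[k] NH k n)
    (hLeib : ∀ a b : NH k n, D (a * b) = D a * b + a * D b)
    (hy : ∀ i : ℕ, D (y k n i) = y k n i * y k n i)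
    (hpsi : ∀ i : ℕ, D (psi k n i) =
      -(y k n i * psi k n i) - psi k n i * y k n (i+1)) :
    D (eIdem k n) = -(eIdem k n * ∑ i ∈ Finset.range n, i • y k n i) ∧
    ∀ z : NH k n, ∃ u : NH k n, D (eIdem k n * z) = eIdem k n * u := by
  have he : D (eIdem k n) = -(eIdem k n * ∑ i ∈ Finset.range n, i • y k n i) := by
    rw [← NilHecke.eFirst_self]
    exact NilHecke.map_eFirst hLeib hy hpsi le_rfl
  exact ⟨he, fun z ↦ ⟨_, leibniz_map_mul_of_eq_neg_mul hLeib he z⟩⟩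

open Stmt12 in
/-- In the nilHecke algebra `NH_n` over a field of characteristic `p`,
with the `p`-differential `∂` (where `∂(y i) = (y i)²`, `∂(ψ i) = −(y i)(ψ i) − (ψ i)(y (i+1))`),
the idempotent `e_n = y_0^{n-1} ⋯ y_{n-1}^0 ψ_{w₀}` satisfies
`∂(e_n) = −e_n · Σ_{i<n} i • y_i` (0-based indexing of the paper's `Σ (i−1) y_i`).
Consequently the right ideal `e_n · NH_n` is closed under `∂`. -/
theorem stmt_12 (k : Type*) [Field k] (p : ℕ) [Fact p.Prime] [CharP k p] (n : ℕ)
    (D : NH k n →ₗ[k] NH k n)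
    (hLeib : ∀ a b : NH k n, D (a * b) = D a * b + a * D b)
    (hy : ∀ i : ℕ, D (y k n i) = y k n i * y k n i)
    (hpsi : ∀ i : ℕ, D (psi k n i) =
      -(y k n i * psi k n i) - psi k n i * y k n (i+1)) :
    D (eIdem k n) = -(eIdem k n * ∑ i ∈ Finset.range n, i • y k n i) ∧
    ∀ z : NH k n, ∃ u : NH k n, D (eIdem k n * z) = eIdem k n * u :=
  stmt_12_general k n D hLeib hy hpsi
end
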